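/- arXiv:1805.10748 — 7 statements merged into one kernel-verified Lean document; each statement's English description precedes it below -/
import Mathlib

section
/- Let G be a subgroup of S_n such that O^p(G) is transitive on {1,...,n}. Then the G-invariants of S_1^* = F^n / F·(1,...,1) vanish. -/
/-!
STATEMENT 2: Let `G ≤ S_n` be a subgroup such that `O^p(G)` is transitive on `{1,…,n}`.
Then the `G`-invariants of `S₁* = Fⁿ / F·(1,…,1)` vanish, where `F` is an algebraically
closed field of characteristic `p > 0`.
-/

noncomputable section

/-- the action of a permutation on the natural permutation module `Fⁿ` -/
def permLin (F : Type) [Field F] (n : ℕ) (g : Equiv.Perm (Fin n)) :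
    (Fin n → F) →ₗ[F] (Fin n → F) where
  toFun v := v ∘ g.symm
  map_add' _ _ := rfl
  map_smul' _ _ := rfl

/-- the line spanned by the all-ones vector -/
def constLine (F : Type) [Field F] (n : ℕ) : Submodule F (Fin n → F) :=
  Submodule.span F {fun _ => (1 : F)}

lemma permLin_le (F : Type) [Field F] (n : ℕ) (g : Equiv.Perm (Fin n)) :
    constLine F n ≤ (constLine F n).comap (permLin F n g) := by
  rw [constLine, Submodule.span_le]
  rintro v hv
  rw [Set.mem_singleton_iff] at hv
  subst hv
  exact Submodule.mem_comap.mpr (Submodule.subset_span rfl)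

/-- the induced action of a permutation on `S₁* = Fⁿ / F·(1,…,1)` -/
def permQ (F : Type) [Field F] (n : ℕ) (g : Equiv.Perm (Fin n)) :
    ((Fin n → F) ⧸ constLine F n) →ₗ[F] ((Fin n → F) ⧸ constLine F n) :=
  Submodule.mapQ _ _ (permLin F n g) (permLin_le F n g)

/-- `O^p(G)`: the smallest normal subgroup of `G` whose quotient is a `p`-group
(the condition "`G ⧸ N` is a `p`-group" is expressed elementwise: every element of `G` has
some `p`-power power lying in `N`). -/
def pResidual (p : ℕ) (G : Type) [Group G] : Subgroup G :=
  sInf {N : Subgroup G | N.Normal ∧ ∀ x : G, ∃ k : ℕ, x ^ p ^ k ∈ N}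

theorem stmt2 (F : Type) [Field F] [IsAlgClosed F] (p : ℕ) [Fact p.Prime] [CharP F p]
    (n : ℕ) (G : Subgroup (Equiv.Perm (Fin n)))
    (htrans : ∀ i j : Fin n, ∃ x : ↥G, x ∈ pResidual p ↥G ∧ (x : Equiv.Perm (Fin n)) i = j)
    (v : (Fin n → F) ⧸ constLine F n)
    (hv : ∀ g ∈ G, permQ F n g v = v) :
    v = 0 := by
  obtain ⟨w, rfl⟩ := Submodule.Quotient.mk_surjective (constLine F n) v
  -- each `g ∈ G` shifts `w` by a constant
  have key : ∀ g ∈ G, ∃ c : F, ∀ j, w (g.symm j) = w j + c := by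
    intro g hg
    have h := hv g hg
    rw [permQ, Submodule.mapQ_apply, Submodule.Quotient.eq] at h
    rw [constLine, Submodule.mem_span_singleton] at h
    obtain ⟨a, ha⟩ := h
    refine ⟨a, fun j => ?_⟩
    have h2 := congrFun ha j
    simp only [Pi.sub_apply, Pi.smul_apply, smul_eq_mul, mul_one, permLin,
      LinearMap.coe_mk, AddHom.coe_mk, Function.comp_apply] at h2
    linear_combination -h2
  rcases Nat.eq_zero_or_pos n with h0 | hpos
  · subst h0
    rw [Submodule.Quotient.mk_eq_zero, constLine, Submodule.mem_span_singleton]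
    exact ⟨0, funext fun j => j.elim0⟩
  set i0 : Fin n := ⟨0, hpos⟩ with hi0
  have key' : ∀ x : ↥G, ∃ c : F, ∀ j, w ((x : Equiv.Perm (Fin n)).symm j) = w j + c :=
    fun x => key x x.2
  choose cf keyc using key'
  have cadd : ∀ x y : ↥G, cf (x * y) = cf x + cf y := by
    intro x y
    have h1 : ((x * y : ↥G) : Equiv.Perm (Fin n)).symm i0
        = (y : Equiv.Perm (Fin n)).symm ((x : Equiv.Perm (Fin n)).symm i0) := rfl
    have h2 := keyc (x * y) i0
    rw [h1, keyc y, keyc x] at h2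
    linear_combination -h2
  have cone : cf 1 = 0 := by
    have h := cadd 1 1
    rw [one_mul] at h
    linear_combination -h
  have cinv : ∀ x : ↥G, cf x⁻¹ = - cf x := by
    intro x
    have h := cadd x x⁻¹
    rw [mul_inv_cancel, cone] at h
    linear_combination -h
  set N : Subgroup ↥G :=
    { carrier := {x | cf x = 0}
      mul_mem' := by intro a b ha hb; simp only [Set.mem_setOf_eq] at *
                     rw [cadd, ha, hb, add_zero]
      one_mem' := cone
      inv_mem' := by intro a ha; simp only [Set.mem_setOf_eq] at *
                     rw [cinv, ha, neg_zero] } with hN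
  have hNmem : N ∈ {M : Subgroup ↥G | M.Normal ∧ ∀ x : ↥G, ∃ k : ℕ, x ^ p ^ k ∈ M} := by
    constructor
    · constructor
      intro a ha g
      show cf (g * a * g⁻¹) = 0
      have ha' : cf a = 0 := ha
      rw [cadd, cadd, cinv, ha']
      ring
    · intro x
      refine ⟨1, ?_⟩
      have hpow : ∀ m : ℕ, cf (x ^ m) = m • cf x := by
        intro m
        induction m with
        | zero => simpa using cone
        | succ k ih => rw [pow_succ, cadd, ih, succ_nsmul]
      show cf (x ^ p ^ 1) = 0
      rw [hpow, nsmul_eq_mul, pow_one, CharP.cast_eq_zero F p, zero_mul]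
  have hle : pResidual p ↥G ≤ N := sInf_le hNmem
  have hfix : ∀ x : ↥G, x ∈ pResidual p ↥G →
      ∀ j, w ((x : Equiv.Perm (Fin n)).symm j) = w j := by
    intro x hx j
    have hx0 : cf x = 0 := hle hx
    rw [keyc x j, hx0, add_zero]
  have hconst : ∀ i j : Fin n, w i = w j := by
    intro i j
    obtain ⟨x, hx, hxi⟩ := htrans i j
    have h := hfix x hx j
    rw [← hxi, Equiv.symm_apply_apply] at h
    rw [h, hxi]
  rw [Submodule.Quotient.mk_eq_zero, constLine, Submodule.mem_span_singleton]
  exact ⟨w i0, funext fun j => by rw [Pi.smul_apply, smul_eq_mul, mul_one, hconst i0 j]⟩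
end
end

section
/- Let n = ab with a, b > 1 integers, and let W = S_a wr S_b ≤ S_n be the wreath product subgroup (imprimitive subgroup preserving a partition of {1,...,n} into b blocks of size a). Then the space of W-invariants in S_1^* = F^n / F·(1,...,1) is zero, unless p = 2 and b = 2, in which case it is one-dimensional. -/
/-!
STATEMENT 3: Let `n = ab` with `a, b > 1`, and let `W = S_a ≀ S_b ≤ S_n` be the wreath
product subgroup (the stabilizer of the partition of `{1,…,n}` into `b` consecutive blocks
of size `a`).  Then the space of `W`-invariants in `S₁* = Fⁿ / F·(1,…,1)` is zero, unless
`p = 2` and `b = 2`, in which case it is one-dimensional.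
-/

noncomputable section

/-- the wreath product subgroup `S_a ≀ S_b ≤ S_n` (`n = a * b`): all permutations preserving
the partition of `{0,…,n-1}` into the `b` consecutive blocks of size `a` (block of `i` is
`i / a`). -/
def blockWreath (n a : ℕ) : Subgroup (Equiv.Perm (Fin n)) where
  carrier := {g | ∀ i j : Fin n,
    ((g i : Fin n) : ℕ) / a = ((g j : Fin n) : ℕ) / a ↔ (i : ℕ) / a = (j : ℕ) / a}
  one_mem' := by
    intro i j
    simp
  mul_mem' := by
    intro g h hg hh
    simp only [Set.mem_setOf_eq] at hg hh ⊢
    intro i j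
    simp only [Equiv.Perm.mul_apply]
    exact (hg (h i) (h j)).trans (hh i j)
  inv_mem' := by
    intro g hg
    simp only [Set.mem_setOf_eq] at hg ⊢
    intro i j
    have := hg (g⁻¹ i) (g⁻¹ j)
    simp only [← Equiv.Perm.mul_apply, mul_inv_cancel, Equiv.Perm.one_apply] at this
    exact this.symm

/-- the space of `W`-invariant vectors in `S₁*` -/
def invQ (F : Type) [Field F] (n : ℕ) (W : Subgroup (Equiv.Perm (Fin n))) :
    Submodule F ((Fin n → F) ⧸ constLine F n) where
  carrier := {v | ∀ g ∈ W, permQ F n g v = v}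
  add_mem' := by
    intro x y hx hy g hg
    rw [map_add, hx g hg, hy g hg]
  zero_mem' := by
    intro g hg
    rw [map_zero]
  smul_mem' := by
    intro c x hx g hg
    rw [map_smul, hx g hg]

lemma mem_constLine_iff {F : Type} [Field F] {n : ℕ} {x : Fin n → F} :
    x ∈ constLine F n ↔ ∃ c : F, ∀ k, x k = c := by
  rw [constLine, Submodule.mem_span_singleton]
  constructor
  · rintro ⟨c, rfl⟩; exact ⟨c, fun k => by simp⟩
  · rintro ⟨c, h⟩; exact ⟨c, funext fun k => by simp [h k]⟩

def blk {n a b : ℕ} (hn : n = a * b) : Fin b × Fin a ≃ Fin n :=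
  finProdFinEquiv.trans (finCongr (by rw [hn, Nat.mul_comm]))

lemma blk_val {n a b : ℕ} (hn : n = a * b) (j : Fin b) (i : Fin a) :
    ((blk hn (j, i) : Fin n) : ℕ) = (i : ℕ) + a * (j : ℕ) := rfl

lemma blk_div {n a b : ℕ} (ha : 0 < a) (hn : n = a * b) (j : Fin b) (i : Fin a) :
    ((blk hn (j, i) : Fin n) : ℕ) / a = (j : ℕ) := by
  rw [blk_val, Nat.add_mul_div_left _ _ ha, Nat.div_eq_of_lt i.2, Nat.zero_add]

def blockPerm {n a b : ℕ} (hn : n = a * b) (σ : Equiv.Perm (Fin b)) : Equiv.Perm (Fin n) :=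
  (blk hn).permCongr (σ.prodCongr (Equiv.refl (Fin a)))

lemma blockPerm_apply {n a b : ℕ} (hn : n = a * b) (σ : Equiv.Perm (Fin b)) (j : Fin b) (i : Fin a) :
    blockPerm hn σ (blk hn (j, i)) = blk hn (σ j, i) := by
  simp [blockPerm, Equiv.permCongr_apply]

lemma mem_blockWreath {n a : ℕ} {g : Equiv.Perm (Fin n)} :
    g ∈ blockWreath n a ↔ ∀ i j : Fin n,
      ((g i : Fin n) : ℕ) / a = ((g j : Fin n) : ℕ) / a ↔ (i : ℕ) / a = (j : ℕ) / a :=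
  Iff.rfl

lemma mem_blockWreath_of_fix {n a : ℕ} {g : Equiv.Perm (Fin n)}
    (h : ∀ k : Fin n, ((g k : Fin n) : ℕ) / a = (k : ℕ) / a) : g ∈ blockWreath n a := by
  rw [mem_blockWreath]
  intro i j
  rw [h i, h j]

lemma swap_mem_blockWreath {n a : ℕ} {u w : Fin n} (huw : (u : ℕ) / a = (w : ℕ) / a) :
    Equiv.swap u w ∈ blockWreath n a := by
  apply mem_blockWreath_of_fix
  intro k
  rcases eq_or_ne k u with rfl | hk1
  · rw [Equiv.swap_apply_left]; exact huw.symm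
  rcases eq_or_ne k w with rfl | hk2
  · rw [Equiv.swap_apply_right]; exact huw
  · rw [Equiv.swap_apply_of_ne_of_ne hk1 hk2]

lemma blockPerm_mem {n a b : ℕ} (ha : 0 < a) (hn : n = a * b) (σ : Equiv.Perm (Fin b)) :
    blockPerm hn σ ∈ blockWreath n a := by
  rw [mem_blockWreath]
  intro k l
  obtain ⟨⟨j1, i1⟩, rfl⟩ := (blk hn).surjective k
  obtain ⟨⟨j2, i2⟩, rfl⟩ := (blk hn).surjective l
  rw [blockPerm_apply, blockPerm_apply, blk_div ha, blk_div ha, blk_div ha, blk_div ha,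
    Fin.val_eq_val, Fin.val_eq_val, Equiv.apply_eq_iff_eq]

lemma mem_invQ {F : Type} [Field F] {n : ℕ} {W : Subgroup (Equiv.Perm (Fin n))}
    {x : (Fin n → F) ⧸ constLine F n} :
    x ∈ invQ F n W ↔ ∀ g ∈ W, permQ F n g x = x := Iff.rfl

lemma permLin_apply {F : Type} [Field F] {n : ℕ} (g : Equiv.Perm (Fin n)) (v : Fin n → F) :
    permLin F n g v = v ∘ ⇑g⁻¹ := by
  ext k
  simp [permLin, Equiv.Perm.inv_def]

lemma permLin_inv_apply {F : Type} [Field F] {n : ℕ} (g : Equiv.Perm (Fin n)) (v : Fin n → F) :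
    permLin F n g⁻¹ v = v ∘ ⇑g := by
  rw [permLin_apply, inv_inv]

lemma mem_invQ_iff {F : Type} [Field F] {n : ℕ} {W : Subgroup (Equiv.Perm (Fin n))}
    (v : Fin n → F) :
    Submodule.Quotient.mk v ∈ invQ F n W ↔ ∀ g ∈ W, (v ∘ ⇑g) - v ∈ constLine F n := by
  rw [mem_invQ]
  constructor
  · intro h g hg
    have h1 := h g⁻¹ (inv_mem hg)
    rw [permQ, Submodule.mapQ_apply, Submodule.Quotient.eq, permLin_inv_apply] at h1
    exact h1
  · intro h g hg
    have h1 := h g⁻¹ (inv_mem hg)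
    rw [permQ, Submodule.mapQ_apply, Submodule.Quotient.eq, permLin_apply]
    exact h1

lemma const_on_blocks {F : Type} [Field F] {n a b : ℕ} (ha : 1 < a) (hb : 1 < b)
    (hn : n = a * b) (v : Fin n → F)
    (hv : ∀ g ∈ blockWreath n a, (v ∘ ⇑g) - v ∈ constLine F n) :
    ∀ i j : Fin n, (i : ℕ) / a = (j : ℕ) / a → v i = v j := by
  intro i j hij
  rcases eq_or_ne i j with rfl | hne
  · rfl
  have ha0 : 0 < a := by omega
  have han : a < n := by
    rw [hn]
    nlinarith
  obtain ⟨k, hk⟩ : ∃ k : Fin n, (k : ℕ) / a ≠ (i : ℕ) / a := by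
    by_cases h0 : (i : ℕ) / a = 0
    · refine ⟨⟨a, han⟩, ?_⟩
      simp only [h0, Nat.div_self ha0]
      omega
    · exact ⟨⟨0, by omega⟩, by simpa [Nat.zero_div] using Ne.symm h0⟩
  obtain ⟨c, hc⟩ := mem_constLine_iff.mp (hv _ (swap_mem_blockWreath hij))
  have hki : k ≠ i := fun h => hk (by rw [h])
  have hkj : k ≠ j := fun h => hk (by rw [h, ← hij])
  have hck := hc k
  rw [Pi.sub_apply, Function.comp_apply, Equiv.swap_apply_of_ne_of_ne hki hkj, sub_self] at hck
  have hci := hc i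
  rw [Pi.sub_apply, Function.comp_apply, Equiv.swap_apply_left, ← hck] at hci
  exact (sub_eq_zero.mp hci).symm

lemma invariant_is_const {F : Type} [Field F] (p : ℕ) [Fact p.Prime] [CharP F p]
    {n a b : ℕ} (ha : 1 < a) (hb : 1 < b) (hn : n = a * b) (hnot : ¬(p = 2 ∧ b = 2))
    (v : Fin n → F) (hv : ∀ g ∈ blockWreath n a, (v ∘ ⇑g) - v ∈ constLine F n) :
    v ∈ constLine F n := by
  have ha0 : 0 < a := by omega
  have hblock := const_on_blocks ha hb hn v hv
  have hb0 : (0 : ℕ) < b := by omega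
  set i0a : Fin a := ⟨0, by omega⟩ with hi0a
  have key : ∀ r s : Fin b, v (blk hn (r, i0a)) = v (blk hn (s, i0a)) := by
    intro r s
    rcases eq_or_ne r s with rfl | hrs
    · rfl
    obtain ⟨c, hc⟩ := mem_constLine_iff.mp (hv _ (blockPerm_mem ha0 hn (Equiv.swap r s)))
    have hc' : ∀ y : Fin b, v (blk hn (Equiv.swap r s y, i0a)) - v (blk hn (y, i0a)) = c := by
      intro y
      have := hc (blk hn (y, i0a))
      rwa [Pi.sub_apply, Function.comp_apply, blockPerm_apply] at this
    by_cases hb2 : b = 2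
    · have hp2 : p ≠ 2 := fun h => hnot ⟨h, hb2⟩
      have h1 := hc' r
      have h2 := hc' s
      rw [Equiv.swap_apply_left] at h1
      rw [Equiv.swap_apply_right] at h2
      have h2c : (2 : F) * c = 0 := by linear_combination -h1 - h2
      have h2ne : (2 : F) ≠ 0 := by
        intro h
        have hd := (CharP.cast_eq_zero_iff F p 2).mp (by exact_mod_cast h)
        exact hp2 ((Nat.prime_dvd_prime_iff_eq Fact.out Nat.prime_two).mp hd)
      have hc0 : c = 0 := by
        rcases mul_eq_zero.mp h2c with h | h
        · exact absurd h h2ne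
        · exact h
      rw [hc0] at h1
      exact (sub_eq_zero.mp h1).symm
    · obtain ⟨tv, htv, htr, hts⟩ : ∃ tv, tv < b ∧ tv ≠ (r : ℕ) ∧ tv ≠ (s : ℕ) := by
        have hex : ((0 : ℕ) ≠ (r : ℕ) ∧ (0 : ℕ) ≠ (s : ℕ)) ∨
            ((1 : ℕ) ≠ (r : ℕ) ∧ (1 : ℕ) ≠ (s : ℕ)) ∨
            ((2 : ℕ) ≠ (r : ℕ) ∧ (2 : ℕ) ≠ (s : ℕ)) := by omega
        have hb3 : 3 ≤ b := by omega
        rcases hex with ⟨h1, h2⟩ | ⟨h1, h2⟩ | ⟨h1, h2⟩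
        exacts [⟨0, by omega, h1, h2⟩, ⟨1, by omega, h1, h2⟩, ⟨2, by omega, h1, h2⟩]
      have h0 := hc' ⟨tv, htv⟩
      rw [Equiv.swap_apply_of_ne_of_ne (Fin.ne_of_val_ne htr) (Fin.ne_of_val_ne hts),
        sub_self] at h0
      have h1 := hc' r
      rw [Equiv.swap_apply_left, ← h0] at h1
      exact (sub_eq_zero.mp h1).symm
  rw [mem_constLine_iff]
  refine ⟨v (blk hn (⟨0, hb0⟩, i0a)), ?_⟩
  intro k
  obtain ⟨⟨j, i⟩, rfl⟩ := (blk hn).surjective k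
  calc v (blk hn (j, i)) = v (blk hn (j, i0a)) :=
        hblock _ _ (by rw [blk_div ha0, blk_div ha0])
    _ = v (blk hn (⟨0, hb0⟩, i0a)) := key _ _

lemma nat_aux {m : ℕ} (h1 : m < 2) (h2 : m ≠ 0) : m = 1 := by omega

lemma nat_aux2 {m : ℕ} (h1 : m < 2) : m = 0 ∨ m = 1 := by omega

def uvec (F : Type) [Field F] (n a : ℕ) : Fin n → F :=
  fun k => if (k : ℕ) / a = 0 then 1 else 0

lemma span_eq (F : Type) [Field F] [CharP F 2] {n a : ℕ} (ha : 1 < a) (hn : n = a * 2) :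
    invQ F n (blockWreath n a) =
      Submodule.span F {Submodule.Quotient.mk (uvec F n a)} := by
  have ha0 : 0 < a := by omega
  have hn0 : 0 < n := by omega
  have han : a < n := by omega
  have hlt : ∀ k : Fin n, (k : ℕ) / a < 2 := by
    intro k
    have h2 := k.2
    exact (Nat.div_lt_iff_lt_mul ha0).mpr (by omega)
  set i0 : Fin n := ⟨0, hn0⟩ with hi0
  set ian : Fin n := ⟨a, han⟩ with hian
  have div0 : (i0 : ℕ) / a = 0 := Nat.zero_div a
  have diva : (ian : ℕ) / a = 1 := Nat.div_self ha0
  apply le_antisymm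
  · intro x hx
    obtain ⟨v, rfl⟩ := Submodule.Quotient.mk_surjective _ x
    have hv := (mem_invQ_iff v).mp hx
    have hblock := const_on_blocks ha (by omega : 1 < 2) hn v hv
    rw [Submodule.mem_span_singleton]
    refine ⟨v i0 - v ian, ?_⟩
    rw [← Submodule.Quotient.mk_smul, Submodule.Quotient.eq]
    rw [mem_constLine_iff]
    refine ⟨-(v ian), fun k => ?_⟩
    rw [Pi.sub_apply, Pi.smul_apply, smul_eq_mul]
    by_cases hk : (k : ℕ) / a = 0
    · have hvk : v k = v i0 := hblock _ _ (by rw [hk, div0])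
      rw [show uvec F n a k = 1 from if_pos hk, hvk]
      ring
    · have hk1 : (k : ℕ) / a = 1 := nat_aux (hlt k) hk
      have hvk : v k = v ian := hblock _ _ (by rw [hk1, diva])
      rw [show uvec F n a k = 0 from if_neg hk, hvk]
      ring
  · rw [Submodule.span_le, Set.singleton_subset_iff, SetLike.mem_coe, mem_invQ_iff]
    intro g hg
    have hg' := mem_blockWreath.mp hg
    rw [mem_constLine_iff]
    by_cases h0 : ((g i0 : Fin n) : ℕ) / a = 0
    · refine ⟨0, fun k => ?_⟩
      have hfix : ((g k : Fin n) : ℕ) / a = (k : ℕ) / a := by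
        by_cases hk : (k : ℕ) / a = 0
        · have := (hg' k i0).mpr (by rw [hk, div0])
          rw [this, h0, hk]
        · have hne : ((g k : Fin n) : ℕ) / a ≠ ((g i0 : Fin n) : ℕ) / a := by
            intro h
            have h' := (hg' k i0).mp h
            rw [div0] at h'
            exact hk h'
          rw [nat_aux (hlt (g k)) (fun h => hne (h.trans h0.symm)), nat_aux (hlt k) hk]
      rw [Pi.sub_apply, Function.comp_apply]
      simp only [uvec]
      rw [hfix, sub_self]
    · refine ⟨1, fun k => ?_⟩
      have h1 : ((g i0 : Fin n) : ℕ) / a = 1 := nat_aux (hlt (g i0)) h0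
      have h2F : (2 : F) = 0 := by exact_mod_cast CharP.cast_eq_zero F 2
      rw [Pi.sub_apply, Function.comp_apply]
      by_cases hk : (k : ℕ) / a = 0
      · have hgk : ((g k : Fin n) : ℕ) / a = ((g i0 : Fin n) : ℕ) / a :=
          (hg' k i0).mpr (by rw [hk, div0])
        rw [show uvec F n a (g k) = 0 from if_neg (by rw [hgk, h1]; omega),
          show uvec F n a k = 1 from if_pos hk]
        linear_combination -h2F
      · have hne : ((g k : Fin n) : ℕ) / a ≠ ((g i0 : Fin n) : ℕ) / a := by
          intro h
          have h' := (hg' k i0).mp h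
          rw [div0] at h'
          exact hk h'
        have hgk0 : ((g k : Fin n) : ℕ) / a = 0 := by
          rcases nat_aux2 (hlt (g k)) with h | h
          · exact h
          · exact absurd (h.trans h1.symm) hne
        rw [show uvec F n a (g k) = 1 from if_pos hgk0,
          show uvec F n a k = 0 from if_neg hk]
        ring

theorem stmt3 (F : Type) [Field F] [IsAlgClosed F] (p : ℕ) [Fact p.Prime] [CharP F p]
    (n a b : ℕ) (ha : 1 < a) (hb : 1 < b) (hn : n = a * b) :
    (¬ (p = 2 ∧ b = 2) → invQ F n (blockWreath n a) = ⊥) ∧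
    ((p = 2 ∧ b = 2) → Module.finrank F ↥(invQ F n (blockWreath n a)) = 1) := by
  constructor
  · intro hnot
    rw [eq_bot_iff]
    intro x hx
    obtain ⟨v, rfl⟩ := Submodule.Quotient.mk_surjective _ x
    rw [Submodule.mem_bot, Submodule.Quotient.mk_eq_zero]
    exact invariant_is_const p ha hb hn hnot v ((mem_invQ_iff v).mp hx)
  · rintro ⟨hp, hb2⟩
    subst hp
    subst hb2
    rw [span_eq F ha hn]
    apply finrank_span_singleton
    intro h
    rw [Submodule.Quotient.mk_eq_zero] at h
    obtain ⟨c, hc⟩ := mem_constLine_iff.mp h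
    have ha0 : 0 < a := by omega
    have h1 := hc ⟨0, by omega⟩
    have h2 := hc ⟨a, by omega⟩
    simp only [uvec] at h1 h2
    rw [if_pos (Nat.zero_div a)] at h1
    rw [if_neg (by rw [Nat.div_self ha0]; omega)] at h2
    exact one_ne_zero (h1.trans h2.symm)
end
end

section
/- Let p = 2 and let λ be a 2-regular partition of n. Then λ is a Jantzen–Seitz partition (i.e. has exactly one normal node) if and only if all parts of λ have the same parity. -/
/-!
STATEMENT 7: Let `p = 2` and let `λ` be a `2`-regular partition of `n`.  Then `λ` is a
Jantzen–Seitz partition (i.e. has exactly one normal node) if and only if all parts of `λ`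
have the same parity.
-/

noncomputable section

open scoped Classical

/-- `f` lists the parts `f 1 ≥ f 2 ≥ ⋯` of a partition of `n` (values `f i` for `i ≥ 1`). -/
def IsPtn (n : ℕ) (f : ℕ → ℕ) : Prop :=
  (∀ i, 1 ≤ i → f (i + 1) ≤ f i) ∧ (∑ i ∈ Finset.Icc 1 n, f i = n) ∧ ∀ i, n < i → f i = 0

/-- `p`-regularity of a parts function: no `p` equal nonzero parts -/
def RegF (p : ℕ) (f : ℕ → ℕ) : Prop :=
  ∀ i, 1 ≤ i → f (i + p - 1) ≠ 0 → f i ≠ f (i + p - 1)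

/-- `h(λ)`: the number of nonzero parts -/
def heightF (n : ℕ) (f : ℕ → ℕ) : ℕ := ((Finset.Icc 1 n).filter fun i => f i ≠ 0).card

/-- row `r` carries a removable node `(r, f r)` -/
def Rem (f : ℕ → ℕ) (r : ℕ) : Prop := 1 ≤ r ∧ f (r + 1) < f r

/-- row `r` carries an addable node `(r, f r + 1)` -/
def Addb (f : ℕ → ℕ) (r : ℕ) : Prop := 1 ≤ r ∧ (r = 1 ∨ f r < f (r - 1))

/-- the residue `(c - r) mod p` of the removable node `(r, f r)` -/
def resRem (p : ℕ) (f : ℕ → ℕ) (r : ℕ) : ZMod p := (f r : ZMod p) - (r : ZMod p)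

/-- the residue of the addable node `(r, f r + 1)` -/
def resAdd (p : ℕ) (f : ℕ → ℕ) (r : ℕ) : ZMod p := (f r : ZMod p) + 1 - (r : ZMod p)

/-- The removable node in row `r` is `i`-normal.  (Reading the `i`-signature of addable
(`+`) and removable (`−`) nodes of residue `i` along the rim from bottom left to top right
and cancelling adjacent `−+` pairs, the surviving `−`'s are the `i`-normal nodes; a `−`
survives iff every segment of rows strictly above it contains at least as many
`i`-removable as `i`-addable nodes.) -/
def NormalN (p : ℕ) (f : ℕ → ℕ) (i : ZMod p) (r : ℕ) : Prop :=
  Rem f r ∧ resRem p f r = i ∧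
  ∀ r', 1 ≤ r' → r' < r →
    ((Finset.Ico r' r).filter fun s => Addb f s ∧ resAdd p f s = i).card ≤
    ((Finset.Ico r' r).filter fun s => Rem f s ∧ resRem p f s = i).card

/-- The addable node in row `r` is `i`-conormal (the dual condition, with the rows below). -/
def ConormalN (p : ℕ) (f : ℕ → ℕ) (i : ZMod p) (r : ℕ) : Prop :=
  Addb f r ∧ resAdd p f r = i ∧
  ∀ r', r < r' →
    ((Finset.Ioc r r').filter fun s => Rem f s ∧ resRem p f s = i).card ≤
    ((Finset.Ioc r r').filter fun s => Addb f s ∧ resAdd p f s = i).card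

/-- `ε_i(λ)`: the number of `i`-normal nodes -/
def epsN (p n : ℕ) (f : ℕ → ℕ) (i : ZMod p) : ℕ :=
  ((Finset.Icc 1 n).filter fun r => NormalN p f i r).card

/-- `φ_i(λ)`: the number of `i`-conormal nodes -/
def phiN (p n : ℕ) (f : ℕ → ℕ) (i : ZMod p) : ℕ :=
  ((Finset.Icc 1 (n + 1)).filter fun r => ConormalN p f i r).card

/-- the total number of normal nodes (over all residues) -/
def totNormal (p n : ℕ) (f : ℕ → ℕ) : ℕ :=
  ((Finset.Icc 1 n).filter fun r => NormalN p f (resRem p f r) r).card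

/-- the total number of conormal nodes (over all residues) -/
def totConormal (p n : ℕ) (f : ℕ → ℕ) : ℕ :=
  ((Finset.Icc 1 (n + 1)).filter fun r => ConormalN p f (resAdd p f r) r).card

/-- the removable node in row `r` is the `i`-good node (the `i`-normal node occurring
leftmost in the signature, i.e. in the largest row) -/
def GoodN (p : ℕ) (f : ℕ → ℕ) (i : ZMod p) (r : ℕ) : Prop :=
  NormalN p f i r ∧ ∀ r', NormalN p f i r' → r' ≤ r

/-- the addable node in row `r` is the `i`-cogood node (the `i`-conormal node occurring
rightmost in the signature, i.e. in the smallest row) -/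
def CogoodN (p : ℕ) (f : ℕ → ℕ) (i : ZMod p) (r : ℕ) : Prop :=
  ConormalN p f i r ∧ ∀ r', ConormalN p f i r' → r ≤ r'

namespace S7

variable {n : ℕ} {f : ℕ → ℕ}

lemma mono (hf : IsPtn n f) : ∀ i j : ℕ, 1 ≤ i → i ≤ j → f j ≤ f i := by
  intro i j hi hij
  induction j with
  | zero => omega
  | succ k ih =>
      rcases Nat.eq_or_lt_of_le hij with h | h
      · exact h ▸ le_rfl
      · exact le_trans (hf.1 k (by omega)) (ih (by omega))

lemma nz_mono (hf : IsPtn n f) {i j : ℕ} (hi : 1 ≤ i) (hij : i ≤ j) (hj : f j ≠ 0) :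
    f i ≠ 0 := by
  have := mono hf i j hi hij; omega

lemma strict (hf : IsPtn n f) (hreg : RegF 2 f) {r : ℕ} (hr : 1 ≤ r) (hfr : f r ≠ 0) :
    f (r + 1) < f r := by
  rcases Nat.eq_zero_or_pos (f (r + 1)) with h | h
  · omega
  · have h1 := hf.1 r hr
    have h2 := hreg r hr (by simpa [show r + 2 - 1 = r + 1 from by omega] using
      (by omega : f (r + 1) ≠ 0))
    simp only [show r + 2 - 1 = r + 1 from by omega] at h2
    omega

lemma rem_of (hf : IsPtn n f) (hreg : RegF 2 f) {r : ℕ} (hr : 1 ≤ r) (hfr : f r ≠ 0) :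
    Rem f r := ⟨hr, strict hf hreg hr hfr⟩

lemma addb_of (hf : IsPtn n f) (hreg : RegF 2 f) {s : ℕ} (hs : 1 ≤ s) (hfs : f s ≠ 0) :
    Addb f s := by
  refine ⟨hs, ?_⟩
  rcases Nat.eq_or_lt_of_le hs with h | h
  · exact Or.inl h.symm
  · right
    have h1 : 1 ≤ s - 1 := by omega
    have h2 : f (s - 1) ≠ 0 := nz_mono hf h1 (by omega) hfs
    have := strict hf hreg h1 h2
    simpa [show s - 1 + 1 = s from by omega] using this

lemma resAdd_eq (r : ℕ) : resAdd 2 f r = resRem 2 f r + 1 := by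
  unfold resAdd resRem; ring

lemma f1_ne (hf : IsPtn n f) (hn : 0 < n) : f 1 ≠ 0 := by
  intro h0
  have hz : ∑ i ∈ Finset.Icc 1 n, f i = 0 := by
    apply Finset.sum_eq_zero
    intro i hi
    simp only [Finset.mem_Icc] at hi
    have := mono hf 1 i (le_refl 1) hi.1
    omega
  have := hf.2.1
  omega

lemma rem_filter (hf : IsPtn n f) (hreg : RegF 2 f) (i : ZMod 2) {a b : ℕ} (ha : 1 ≤ a)
    (hb : ∀ s, a ≤ s → s < b → f s ≠ 0) :
    (Finset.Ico a b).filter (fun s => Rem f s ∧ resRem 2 f s = i) =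
      (Finset.Ico a b).filter (fun s => resRem 2 f s = i) := by
  apply Finset.filter_congr
  intro s hs
  simp only [Finset.mem_Ico] at hs
  constructor
  · rintro ⟨_, h⟩; exact h
  · intro h; exact ⟨rem_of hf hreg (by omega) (hb s hs.1 hs.2), h⟩

lemma addb_filter (hf : IsPtn n f) (hreg : RegF 2 f) (i : ZMod 2) {a b : ℕ} (ha : 1 ≤ a)
    (hb : ∀ s, a ≤ s → s < b → f s ≠ 0) :
    (Finset.Ico a b).filter (fun s => Addb f s ∧ resAdd 2 f s = i) =
      (Finset.Ico a b).filter (fun s => resRem 2 f s ≠ i) := by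
  apply Finset.filter_congr
  intro s hs
  simp only [Finset.mem_Ico] at hs
  have key : ∀ x y : ZMod 2, x + 1 = y ↔ x ≠ y := by decide
  constructor
  · rintro ⟨_, h⟩
    rw [resAdd_eq] at h
    exact (key _ _).1 h
  · intro h
    exact ⟨addb_of hf hreg (by omega) (hb s hs.1 hs.2),
      by rw [resAdd_eq]; exact (key _ _).2 h⟩

lemma normal_one (hf : IsPtn n f) (hreg : RegF 2 f) (hn : 0 < n) :
    NormalN 2 f (resRem 2 f 1) 1 := by
  refine ⟨rem_of hf hreg le_rfl (f1_ne hf hn), rfl, ?_⟩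
  intro r' h1 h2; omega

/-- If the residues alternate, only row 1 is normal. -/
lemma lemA (hf : IsPtn n f) (hreg : RegF 2 f) (hn : 0 < n)
    (halt : ∀ s, 1 ≤ s → f (s + 1) ≠ 0 → resRem 2 f s ≠ resRem 2 f (s + 1)) :
    totNormal 2 n f = 1 := by
  have hfilter : (Finset.Icc 1 n).filter (fun r => NormalN 2 f (resRem 2 f r) r) = {1} := by
    ext r
    simp only [Finset.mem_filter, Finset.mem_Icc, Finset.mem_singleton]
    constructor
    · rintro ⟨⟨hr1, hrn⟩, hN⟩
      by_contra hne
      have hr2 : 2 ≤ r := by omega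
      obtain ⟨t, rfl⟩ : ∃ t, r = t + 1 := ⟨r - 1, by omega⟩
      have ht1 : 1 ≤ t := by omega
      have hfr : f (t + 1) ≠ 0 := by
        have := hN.1.2; omega
      have hprev : f t ≠ 0 := nz_mono hf ht1 (by omega) hfr
      have hcond := hN.2.2 t ht1 (by omega)
      rw [rem_filter hf hreg _ ht1 (fun s hs1 hs2 => nz_mono hf (by omega) (by omega) hfr),
          addb_filter hf hreg _ ht1 (fun s hs1 hs2 => nz_mono hf (by omega) (by omega) hfr)]
        at hcond
      rw [Nat.Ico_succ_singleton, Finset.filter_singleton, Finset.filter_singleton] at hcond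
      have hne' : resRem 2 f t ≠ resRem 2 f (t + 1) := halt t ht1 hfr
      rw [if_pos hne', if_neg (by exact hne')] at hcond
      simp at hcond
    · rintro rfl
      exact ⟨⟨le_rfl, hn⟩, normal_one hf hreg hn⟩
  unfold totNormal
  rw [hfilter]
  rfl

lemma invariant (hf : IsPtn n f) (hreg : RegF 2 f) {r : ℕ} (hr : 1 ≤ r)
    (hne : f (r + 1) ≠ 0) (heq : resRem 2 f r = resRem 2 f (r + 1))
    (hmin : ∀ s, 1 ≤ s → s < r → resRem 2 f s ≠ resRem 2 f (s + 1)) :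
    ∀ m k, 1 ≤ k → r = k + m →
      ((Finset.Ico k (r + 1)).filter (fun s => resRem 2 f s = resRem 2 f (r + 1))).card =
        ((Finset.Ico k (r + 1)).filter (fun s => resRem 2 f s ≠ resRem 2 f (r + 1))).card +
          (if resRem 2 f k = resRem 2 f (r + 1) then 1 else 0) := by
  intro m
  induction m with
  | zero =>
      intro k hk hkm
      have hkr : k = r := by omega
      subst hkr
      rw [Nat.Ico_succ_singleton, Finset.filter_singleton, Finset.filter_singleton]
      rw [if_pos heq, if_neg (by simpa using heq), if_pos heq]
      simp
  | succ m ih =>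
      intro k hk hkm
      have hkr : k < r := by omega
      have hstep : resRem 2 f k ≠ resRem 2 f (k + 1) := hmin k hk hkr
      have hins : Finset.Ico k (r + 1) = insert k (Finset.Ico (k + 1) (r + 1)) := by
        exact (Finset.insert_Ico_add_one_left_eq_Ico (by omega)).symm
      have hnotmem : k ∉ Finset.Ico (k + 1) (r + 1) := by
        simp
      have ihk := ih (k + 1) (by omega) (by omega)
      rw [hins, Finset.filter_insert, Finset.filter_insert]
      by_cases hb : resRem 2 f (k + 1) = resRem 2 f (r + 1)
      · have ha : resRem 2 f k ≠ resRem 2 f (r + 1) := fun h => hstep (h.trans hb.symm)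
        rw [if_neg ha, if_pos ha, Finset.card_insert_of_notMem
          (by simp [Finset.mem_filter, hnotmem])]
        rw [if_pos hb] at ihk
        rw [if_neg ha]
        omega
      · have ha : resRem 2 f k = resRem 2 f (r + 1) := by
          have : ∀ x y z : ZMod 2, x ≠ y → ¬ y = z → x = z := by decide
          exact this _ _ _ hstep hb
        rw [if_pos ha, if_neg (by simpa using ha), Finset.card_insert_of_notMem
          (by simp [Finset.mem_filter, hnotmem])]
        rw [if_neg hb] at ihk
        rw [if_pos ha]
        omega

/-- If residues agree at some adjacent nonzero rows, there are ≥ 2 normal nodes. -/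
lemma lemB (hf : IsPtn n f) (hreg : RegF 2 f) (hn : 0 < n) {r : ℕ} (hr : 1 ≤ r)
    (hne : f (r + 1) ≠ 0) (heq : resRem 2 f r = resRem 2 f (r + 1)) :
    totNormal 2 n f ≠ 1 := by
  -- take the minimal such r
  have hex : ∃ r, 1 ≤ r ∧ f (r + 1) ≠ 0 ∧ resRem 2 f r = resRem 2 f (r + 1) :=
    ⟨r, hr, hne, heq⟩
  classical
  obtain ⟨r₀, ⟨hr₀, hne₀, heq₀⟩, hmin₀⟩ :
      ∃ r₀, (1 ≤ r₀ ∧ f (r₀ + 1) ≠ 0 ∧ resRem 2 f r₀ = resRem 2 f (r₀ + 1)) ∧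
        ∀ s, s < r₀ → ¬(1 ≤ s ∧ f (s + 1) ≠ 0 ∧ resRem 2 f s = resRem 2 f (s + 1)) :=
    ⟨Nat.find hex, Nat.find_spec hex, fun s hs => Nat.find_min hex hs⟩
  have hmin : ∀ s, 1 ≤ s → s < r₀ → resRem 2 f s ≠ resRem 2 f (s + 1) := by
    intro s hs1 hs2 hcontra
    exact hmin₀ s hs2 ⟨hs1, nz_mono hf (by omega) (by omega) hne₀, hcontra⟩
  -- row r₀ + 1 is normal
  have hnorm : NormalN 2 f (resRem 2 f (r₀ + 1)) (r₀ + 1) := by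
    refine ⟨rem_of hf hreg (by omega) hne₀, rfl, ?_⟩
    intro r' h1 h2
    have hnz : ∀ s, r' ≤ s → s < r₀ + 1 → f s ≠ 0 := by
      intro s hs1 hs2
      exact nz_mono hf (by omega) (by omega) hne₀
    rw [rem_filter hf hreg _ h1 hnz, addb_filter hf hreg _ h1 hnz]
    have := invariant hf hreg hr₀ hne₀ heq₀ hmin (r₀ - r') r' h1 (by omega)
    omega
  -- row 1 is normal
  have h1n : NormalN 2 f (resRem 2 f 1) 1 := normal_one hf hreg hn
  have hr₀n : r₀ + 1 ≤ n := by
    by_contra h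
    exact hne₀ (hf.2.2 _ (by omega))
  intro htot
  have h1mem : 1 ∈ (Finset.Icc 1 n).filter (fun r => NormalN 2 f (resRem 2 f r) r) := by
    simp only [Finset.mem_filter, Finset.mem_Icc]
    exact ⟨⟨le_rfl, by omega⟩, h1n⟩
  have h2mem : r₀ + 1 ∈ (Finset.Icc 1 n).filter (fun r => NormalN 2 f (resRem 2 f r) r) := by
    simp only [Finset.mem_filter, Finset.mem_Icc]
    exact ⟨⟨by omega, hr₀n⟩, hnorm⟩
  have h2 : 1 < ((Finset.Icc 1 n).filter (fun r => NormalN 2 f (resRem 2 f r) r)).card :=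
    Finset.one_lt_card.2 ⟨1, h1mem, r₀ + 1, h2mem, by omega⟩
  unfold totNormal at htot
  omega

lemma eps_eq_iff {r : ℕ} :
    resRem 2 f r = resRem 2 f (r + 1) ↔ f r % 2 ≠ f (r + 1) % 2 := by
  unfold resRem
  have key : ∀ a b c : ZMod 2, a - c = b - (c + 1) ↔ a = b + 1 := by decide
  have hcast : ((r + 1 : ℕ) : ZMod 2) = (r : ZMod 2) + 1 := by push_cast; ring
  rw [hcast, key]
  have : ((f (r + 1) : ZMod 2) + 1) = ((f (r + 1) + 1 : ℕ) : ZMod 2) := by push_cast; ring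
  rw [this, ZMod.natCast_eq_natCast_iff]
  unfold Nat.ModEq
  omega

lemma adj {i j : ℕ} (hij : i ≤ j) (h : f i % 2 ≠ f j % 2) :
    ∃ r, i ≤ r ∧ r < j ∧ f r % 2 ≠ f (r + 1) % 2 := by
  by_contra hc
  push_neg at hc
  have key : ∀ d, i + d ≤ j → f (i + d) % 2 = f i % 2 := by
    intro d
    induction d with
    | zero => simp
    | succ e ih =>
        intro hd
        rw [show i + (e + 1) = (i + e) + 1 from by ring,
          ← hc (i + e) (by omega) (by omega)]
        exact ih (by omega)
  have hj := key (j - i) (by omega)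
  rw [show i + (j - i) = j from by omega] at hj
  omega

end S7

theorem stmt7 (n : ℕ) (hn : 0 < n) (f : ℕ → ℕ) (hf : IsPtn n f) (hreg : RegF 2 f) :
    totNormal 2 n f = 1 ↔
      ∀ i j : ℕ, 1 ≤ i → 1 ≤ j → f i ≠ 0 → f j ≠ 0 → f i % 2 = f j % 2 := by
  constructor
  · intro htot i j hi hj hfi hfj
    by_contra hpar
    have main : ∀ a b : ℕ, 1 ≤ a → a ≤ b → f b ≠ 0 → f a % 2 ≠ f b % 2 → False := by
      intro a b ha hab hfb hne
      obtain ⟨r, hr1, hr2, hr3⟩ := S7.adj hab hne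
      have hfr1 : f (r + 1) ≠ 0 := S7.nz_mono hf (by omega) (by omega) hfb
      have heq : resRem 2 f r = resRem 2 f (r + 1) := S7.eps_eq_iff.2 hr3
      exact S7.lemB hf hreg hn (by omega) hfr1 heq htot
    rcases le_or_gt i j with h | h
    · exact main i j hi h hfj hpar
    · exact main j i hj (by omega) hfi (by omega)
  · intro hpar
    apply S7.lemA hf hreg hn
    intro s hs hfs1
    have hfs : f s ≠ 0 := S7.nz_mono hf hs (by omega) hfs1
    have hp := hpar s (s + 1) hs (by omega) hfs hfs1
    rw [Ne, S7.eps_eq_iff]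
    omega
end
end

section
/- Let λ be a p-regular partition of n and i a residue mod p with ε_i(λ) > 0 and φ_i(λ) > 0. Let B = (a,b) be the i-good node and C = (c,d) the i-cogood node of λ. Then the partition (λ_B)^C, obtained from λ by removing B and adding C, is p-singular if and only if c = a + p − 1 and d = b − 1. -/
/-!
STATEMENT 10: Let `λ` be a `p`-regular partition of `n` and `i` a residue mod `p` with
`ε_i(λ) > 0` and `φ_i(λ) > 0`.  Let `B = (a, b)` be the `i`-good node and `C = (c, d)` the
`i`-cogood node of `λ`.  Then the partition `(λ_B)^C`, obtained from `λ` by removing `B`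
and adding `C`, is `p`-singular if and only if `c = a + p − 1` and `d = b − 1`.
-/

noncomputable section

open scoped Classical

private lemma stmt10_anti (u : ℕ → ℕ) (h : ∀ i, 1 ≤ i → u (i + 1) ≤ u i) :
    ∀ s t, 1 ≤ s → s ≤ t → u t ≤ u s := by
  intro s t hs hst
  induction t, hst using Nat.le_induction with
  | base => exact le_refl _
  | succ t hst ih => exact le_trans (h t (le_trans hs hst)) ih

theorem stmt10 (p : ℕ) (hp : p.Prime) (n : ℕ) (f : ℕ → ℕ) (hf : IsPtn n f)
    (hreg : RegF p f) (i : ZMod p)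
    (heps : 0 < epsN p n f i) (hphi : 0 < phiN p n f i)
    (a c : ℕ) (hgood : GoodN p f i a) (hcogood : CogoodN p f i c)
    (b d : ℕ) (hb : b = f a) (hd : d = f c + 1) :
    ¬ RegF p (fun s => if s = a then f a - 1 else if s = c then f c + 1 else f s) ↔
      (c = a + p - 1 ∧ d = b - 1) := by
  haveI : Fact (1 < p) := ⟨hp.one_lt⟩
  haveI : NeZero p := ⟨hp.pos.ne'⟩
  have hp2 : 2 ≤ p := hp.two_le
  obtain ⟨⟨ha1, hfa⟩, hresa, hnorma⟩ := hgood.1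
  obtain ⟨⟨hc1, haddc⟩, hresc, hconc⟩ := hcogood.1
  have hmono : ∀ s t, 1 ≤ s → s ≤ t → f t ≤ f s := stmt10_anti f hf.1
  have h10 : (1 : ZMod p) ≠ 0 := one_ne_zero
  have hac : a ≠ c := by
    intro h
    subst h
    rw [resAdd] at hresc
    rw [resRem] at hresa
    exact h10 (by linear_combination hresc - hresa)
  set g : ℕ → ℕ := fun s => if s = a then f a - 1 else if s = c then f c + 1 else f s with hgdef
  have hga : g a = f a - 1 := by simp [hgdef]
  have hgc : g c = f c + 1 := by simp [hgdef, Ne.symm hac]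
  have hgo : ∀ s, s ≠ a → s ≠ c → g s = f s := by
    intro s h1 h2; simp [hgdef, h1, h2]
  constructor
  · -- hard direction
    intro hsing
    rw [RegF] at hsing
    push_neg at hsing
    obtain ⟨r, hr1, hrne, hreq⟩ := hsing
    have hgap : c = a + 1 → f (a + 1) + p ≤ f a := by
      intro h
      have h2 : resAdd p f c = i := hresc
      rw [resAdd, h] at h2
      rw [resRem] at hresa
      push_cast at h2
      have h1 : ((f a : ℕ) : ZMod p) = ((f (a + 1) : ℕ) : ZMod p) := by
        linear_combination hresa - h2
      have hdvd : p ∣ f a - f (a + 1) := by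
        have h3 : ((f a - f (a + 1) : ℕ) : ZMod p) = 0 := by
          rw [Nat.cast_sub (le_of_lt hfa), h1]; ring
        exact (ZMod.natCast_eq_zero_iff _ _).mp h3
      have := Nat.le_of_dvd (by omega) hdvd
      omega
    have hstep : ∀ s, 1 ≤ s → g (s + 1) ≤ g s := by
      intro s hs
      by_cases hsa : s = a
      · subst hsa
        by_cases h1 : s + 1 = c
        · rw [show s + 1 = c from h1, hgc, hga]
          have hg2 := hgap h1.symm
          have hfc : f c = f (s + 1) := by rw [← h1]
          omega
        · rw [hga, hgo (s + 1) (by omega) h1]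
          omega
      · by_cases hsc : s = c
        · subst hsc
          by_cases h1 : s + 1 = a
          · rw [hgc, show s + 1 = a from h1, hga]
            have h2 : f a ≤ f s := by rw [← h1]; exact hf.1 s hs
            omega
          · rw [hgc, hgo (s + 1) h1 (by omega)]
            have := hf.1 s hs; omega
        · rw [hgo s hsa hsc]
          by_cases h1 : s + 1 = a
          · rw [h1, hga]
            have h2 : f a ≤ f s := by rw [← h1]; exact hf.1 s hs
            omega
          · by_cases h2 : s + 1 = c
            · rw [h2, hgc]
              rcases haddc with h3 | h3
              · omega
              · have h4 : f (c - 1) = f s := by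
                  have : c - 1 = s := by omega
                  rw [this]
                omega
            · rw [hgo (s + 1) h1 h2]
              exact hf.1 s hs
    have ganti : ∀ s t, 1 ≤ s → s ≤ t → g t ≤ g s := stmt10_anti g hstep
    obtain ⟨v, hv⟩ : ∃ v, g r = v := ⟨g r, rfl⟩
    have hconst : ∀ s, r ≤ s → s ≤ r + p - 1 → g s = v := by
      intro s h1 h2
      have l1 := ganti r s hr1 h1
      have l2 := ganti s (r + p - 1) (le_trans hr1 h1) h2
      omega
    have hv1 : 1 ≤ v := by
      have := hconst (r + p - 1) (by omega) (le_refl _)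
      omega
    have hfval : ∀ s, r ≤ s → s ≤ r + p - 1 → s ≠ a → s ≠ c → f s = v := by
      intro s h1 h2 h3 h4
      rw [← hgo s h3 h4]; exact hconst s h1 h2
    have hfaval : r ≤ a → a ≤ r + p - 1 → f a = v + 1 := by
      intro h1 h2
      have h3 := hconst a h1 h2
      rw [hga] at h3
      omega
    have hfcval : r ≤ c → c ≤ r + p - 1 → f c + 1 = v := by
      intro h1 h2
      have h3 := hconst c h1 h2
      rw [hgc] at h3; omega
    by_cases hain : r ≤ a ∧ a ≤ r + p - 1
    · by_cases hcin : r ≤ c ∧ c ≤ r + p - 1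
      · -- both in window: the conclusion
        have hA := hfaval hain.1 hain.2
        have hC := hfcval hcin.1 hcin.2
        have hlt : a < c := by
          rcases lt_or_ge a c with h | h
          · exact h
          · exfalso
            have := hmono c a hc1 h
            omega
        have hi1 : i = (v : ZMod p) + 1 - (a : ZMod p) := by
          rw [← hresa, resRem, hA]; push_cast; ring
        have hi2 : i = (v : ZMod p) - (c : ZMod p) := by
          rw [← hresc, resAdd]
          have h2 : ((f c : ℕ) : ZMod p) + 1 = (v : ZMod p) := by
            exact_mod_cast congrArg (Nat.cast : ℕ → ZMod p) hC
          linear_combination h2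
        have hiC : (c : ZMod p) + 1 = (a : ZMod p) := by linear_combination hi2 - hi1
        have hca_lt : c - a < p := by omega
        have hcast : ((c - a : ℕ) : ZMod p) = ((p - 1 : ℕ) : ZMod p) := by
          rw [Nat.cast_sub (le_of_lt hlt), Nat.cast_sub hp.one_le, ZMod.natCast_self]
          push_cast
          linear_combination hiC
        have hval : c - a = p - 1 := by
          have h1 := ZMod.val_cast_of_lt (n := p) hca_lt
          have h2 := ZMod.val_cast_of_lt (n := p) (show p - 1 < p by omega)
          rw [hcast, h2] at h1
          omega
        exact ⟨by omega, by omega⟩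
      · -- a in window, c not: row a+p-1 is i-normal, contradicting goodness
        exfalso
        have hA := hfaval hain.1 hain.2
        have har : a = r := by
          by_contra hne
          have hra : r < a := by omega
          have hfr : f r = v := hfval r (le_refl _) (by omega) (by omega)
            (by rintro rfl; exact hcin ⟨le_refl _, by omega⟩)
          rcases eq_or_lt_of_le hain.2 with he | hlt2
          · have := hmono r a hr1 (by omega)
            omega
          · have h5 : f (r + p - 1) = v := hfval _ (by omega) (le_refl _) (by omega)
              (by rintro rfl; exact hcin ⟨by omega, le_refl _⟩)
            exact hreg r hr1 (by omega) (by omega)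
        have hfs : ∀ s, a + 1 ≤ s → s ≤ a + p - 1 → f s = v := by
          intro s h1 h2
          refine hfval s (by omega) (by omega) (by omega) ?_
          rintro rfl
          exact hcin ⟨by omega, by omega⟩
        have hfap : f (a + p) < v := by
          have h1 : f (a + p) ≤ f (a + p - 1) := by
            have h2 := hf.1 (a + p - 1) (by omega)
            rw [show a + p - 1 + 1 = a + p by omega] at h2
            exact h2
          have h2 : f (a + p - 1) = v := hfs _ (by omega) (le_refl _)
          rcases lt_or_eq_of_le h1 with h | h
          · omega
          · exfalso
            have h3 : f (a + 1) = v := hfs _ (le_refl _) (by omega)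
            have h4 := hreg (a + 1) (by omega)
            rw [show a + 1 + p - 1 = a + p by omega] at h4
            exact h4 (by omega) (by omega)
        have hi1 : i = (v : ZMod p) + 1 - (a : ZMod p) := by
          rw [← hresa, resRem, hA]; push_cast; ring
        have hnoadd : ∀ s, a ≤ s → s < a + p - 1 → ¬ (Addb f s ∧ resAdd p f s = i) := by
          rintro s hs1 hs2 ⟨hadd, hres⟩
          rcases eq_or_lt_of_le hs1 with heq | hs1'
          · rw [resAdd, ← heq, hA] at hres
            apply h10
            push_cast at hres
            linear_combination hres + hi1
          · rcases eq_or_lt_of_le (Nat.succ_le_of_lt hs1') with h | h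
            · have hfsv : f s = v := hfs s (by omega) (by omega)
              rw [resAdd, hfsv, ← h] at hres
              apply h10
              push_cast at hres
              linear_combination - hi1 - hres
            · have h1 : f s = v := hfs s (by omega) (by omega)
              have h2 : f (s - 1) = v := hfs (s - 1) (by omega) (by omega)
              rcases hadd.2 with h3 | h3
              · omega
              · omega
        have hnormal : NormalN p f i (a + p - 1) := by
          refine ⟨⟨by omega, ?_⟩, ?_, ?_⟩
          · rw [show a + p - 1 + 1 = a + p by omega]
            have := hfs (a + p - 1) (by omega) (le_refl _)
            omega
          · rw [resRem, hfs (a + p - 1) (by omega) (le_refl _)]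
            have hcst : ((a + p - 1 : ℕ) : ZMod p) + 1 = (a : ZMod p) := by
              have h : (a + p - 1) + 1 = a + p := by omega
              have h2 : ((a + p - 1 : ℕ) : ZMod p) + 1 = ((a + p : ℕ) : ZMod p) := by
                exact_mod_cast congrArg (Nat.cast : ℕ → ZMod p) h
              rw [h2]; push_cast; simp [ZMod.natCast_self]
            rw [hi1]
            linear_combination - hcst
          · intro r' h1 h2
            have hsub1 : (Finset.Ico r' (a + p - 1)).filter (fun s => Addb f s ∧ resAdd p f s = i) ⊆
                (Finset.Ico r' a).filter (fun s => Addb f s ∧ resAdd p f s = i) := by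
              intro s hs
              simp only [Finset.mem_filter, Finset.mem_Ico] at hs ⊢
              refine ⟨⟨hs.1.1, ?_⟩, hs.2⟩
              by_contra h
              exact hnoadd s (by omega) hs.1.2 hs.2
            have hsub2 : (Finset.Ico r' a).filter (fun s => Rem f s ∧ resRem p f s = i) ⊆
                (Finset.Ico r' (a + p - 1)).filter (fun s => Rem f s ∧ resRem p f s = i) :=
              Finset.filter_subset_filter _ (Finset.Ico_subset_Ico_right (by omega))
            have hmid : ((Finset.Ico r' a).filter (fun s => Addb f s ∧ resAdd p f s = i)).card ≤
                ((Finset.Ico r' a).filter (fun s => Rem f s ∧ resRem p f s = i)).card := by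
              rcases lt_or_ge r' a with h | h
              · exact hnorma r' h1 h
              · rw [Finset.Ico_eq_empty (by omega)]
                simp
            exact le_trans (Finset.card_le_card hsub1) (le_trans hmid (Finset.card_le_card hsub2))
        have := hgood.2 (a + p - 1) hnormal
        omega
    · by_cases hcin : r ≤ c ∧ c ≤ r + p - 1
      · -- c in window, a not: row r is i-conormal, contradicting cogoodness
        exfalso
        have hC := hfcval hcin.1 hcin.2
        have hfs : ∀ s, r ≤ s → s ≤ r + p - 1 → s ≠ c → f s = v := by
          intro s h1 h2 h3
          refine hfval s h1 h2 ?_ h3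
          rintro rfl
          exact hain ⟨h1, h2⟩
        have hcr : c = r + p - 1 := by
          by_contra hne
          have h1 : c < r + p - 1 := by omega
          have h2 : f (r + p - 1) = v := hfs _ (by omega) (le_refl _) (by omega)
          have := hmono c (r + p - 1) hc1 (by omega)
          omega
        have hrc : r < c := by omega
        have hfr : f r = v := hfs r (le_refl _) (by omega) (by omega)
        have haddr : Addb f r := by
          refine ⟨hr1, ?_⟩
          rcases eq_or_lt_of_le hr1 with h | h
          · exact Or.inl h.symm
          · right
            have h1 : f r ≤ f (r - 1) := by
              have h2 := hf.1 (r - 1) (by omega)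
              rw [show r - 1 + 1 = r by omega] at h2
              exact h2
            rcases lt_or_eq_of_le h1 with h2 | h2
            · exact h2
            · exfalso
              have h3 : f (r + p - 2) = v := hfs _ (by omega) (by omega) (by omega)
              have h4 := hreg (r - 1) (by omega)
              rw [show r - 1 + p - 1 = r + p - 2 by omega] at h4
              exact h4 (by omega) (by omega)
        have hi2 : i = (v : ZMod p) - (c : ZMod p) := by
          rw [← hresc, resAdd]
          have h2 : ((f c : ℕ) : ZMod p) + 1 = (v : ZMod p) := by
            exact_mod_cast congrArg (Nat.cast : ℕ → ZMod p) hC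
          linear_combination h2
        have hccast : (c : ZMod p) + 1 = (r : ZMod p) := by
          have h : c + 1 = r + p := by omega
          have h2 : ((c : ℕ) : ZMod p) + 1 = ((r + p : ℕ) : ZMod p) := by
            exact_mod_cast congrArg (Nat.cast : ℕ → ZMod p) h
          rw [h2]; push_cast; simp [ZMod.natCast_self]
        have hresr : resAdd p f r = i := by
          rw [resAdd, hfr, hi2]
          linear_combination hccast
        have hnorem : ∀ s, r < s → s ≤ c → ¬ (Rem f s ∧ resRem p f s = i) := by
          rintro s hs1 hs2 ⟨hrem, hres⟩
          rcases eq_or_lt_of_le hs2 with heq | hs2'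
          · rw [resRem, heq] at hres
            have h2 : ((f c : ℕ) : ZMod p) + 1 = (v : ZMod p) := by
              exact_mod_cast congrArg (Nat.cast : ℕ → ZMod p) hC
            apply h10
            rw [hi2] at hres
            linear_combination h2 - hres
          · have hfsv : f s = v := hfs s (by omega) (by omega) (by omega)
            rcases eq_or_lt_of_le (Nat.succ_le_of_lt hs2') with h | h
            · rw [resRem, hfsv] at hres
              apply h10
              rw [hi2] at hres
              have hcs : ((c : ℕ) : ZMod p) = (s : ZMod p) + 1 := by
                exact_mod_cast congrArg (Nat.cast : ℕ → ZMod p) h.symm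
              linear_combination hres - hcs
            · have h1 : f (s + 1) = v := hfs (s + 1) (by omega) (by omega) (by omega)
              have h2 := hrem.2
              omega
        have hcon : ConormalN p f i r := by
          refine ⟨haddr, hresr, ?_⟩
          intro r' hr'
          have hsub1 : (Finset.Ioc r r').filter (fun s => Rem f s ∧ resRem p f s = i) ⊆
              (Finset.Ioc c r').filter (fun s => Rem f s ∧ resRem p f s = i) := by
            intro s hs
            simp only [Finset.mem_filter, Finset.mem_Ioc] at hs ⊢
            refine ⟨⟨?_, hs.1.2⟩, hs.2⟩
            by_contra h
            exact hnorem s hs.1.1 (by omega) hs.2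
          have hsub2 : (Finset.Ioc c r').filter (fun s => Addb f s ∧ resAdd p f s = i) ⊆
              (Finset.Ioc r r').filter (fun s => Addb f s ∧ resAdd p f s = i) :=
            Finset.filter_subset_filter _ (Finset.Ioc_subset_Ioc_left (by omega))
          have hmid : ((Finset.Ioc c r').filter (fun s => Rem f s ∧ resRem p f s = i)).card ≤
              ((Finset.Ioc c r').filter (fun s => Addb f s ∧ resAdd p f s = i)).card := by
            rcases lt_or_ge c r' with h | h
            · exact hconc r' h
            · rw [Finset.Ioc_eq_empty (by omega)]
              simp
          exact le_trans (Finset.card_le_card hsub1) (le_trans hmid (Finset.card_le_card hsub2))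
        have := hcogood.2 r hcon
        omega
      · -- neither: f itself singular, contradiction
        exfalso
        have h1 : f r = v := hfval r (le_refl _) (by omega)
          (by rintro rfl; exact hain ⟨le_refl _, by omega⟩)
          (by rintro rfl; exact hcin ⟨le_refl _, by omega⟩)
        have h2 : f (r + p - 1) = v := hfval _ (by omega) (le_refl _)
          (by rintro rfl; exact hain ⟨by omega, le_refl _⟩)
          (by rintro rfl; exact hcin ⟨by omega, le_refl _⟩)
        exact hreg r hr1 (by omega) (by omega)
  · -- easy direction
    rintro ⟨hcap, hdb⟩ hreg'
    have hfc1 : f c + 1 = f a - 1 := by omega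
    have h1 : g (a + p - 1) = f c + 1 := by rw [← hcap, hgc]
    exact hreg' a ha1 (by omega) (by omega)
end
end

section
/- Let p = 2 and λ a 2-regular partition of n with exactly two normal nodes (ε_0(λ) + ε_1(λ) = 2). Suppose ε_i(λ) > 0 and φ_i(λ) > 0 for some i ∈ {0,1}, let B be the i-good node and C the i-cogood node of λ, and suppose (λ_B)^C is 2-singular. Then either: (a) λ has at least 3 parts and there exists 1 ≤ j < h(λ) with λ_j = λ_{j+1} + 2 and λ_1 ≡ ... ≡ λ_{j−1} ≢ λ_j ≡ λ_{j+1} ≢ λ_{j+2} ≡ ... ≡ λ_{h(λ)} (mod 2); or (b) λ_1, ..., λ_{h(λ)−1} are all odd and λ_{h(λ)} = 2. -/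
/-!
STATEMENT 11: Let `p = 2` and `λ` a `2`-regular partition of `n` with exactly two normal
nodes (`ε₀(λ) + ε₁(λ) = 2`).  Suppose `ε_i(λ) > 0` and `φ_i(λ) > 0` for some `i ∈ {0,1}`,
let `B` be the `i`-good node and `C` the `i`-cogood node of `λ`, and suppose `(λ_B)^C` is
`2`-singular.  Then either (a) `λ` has at least 3 parts and there is `1 ≤ j < h(λ)` with
`λ_j = λ_{j+1} + 2` and
`λ₁ ≡ ⋯ ≡ λ_{j−1} ≢ λ_j ≡ λ_{j+1} ≢ λ_{j+2} ≡ ⋯ ≡ λ_{h(λ)} (mod 2)`;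
or (b) `λ₁, …, λ_{h(λ)−1}` are all odd and `λ_{h(λ)} = 2`.
-/

noncomputable section

open scoped Classical

/-! ### Auxiliary machinery -/

section Aux

lemma ptn_mono {n : ℕ} {f : ℕ → ℕ} (hf : IsPtn n f) :
    ∀ a b, 1 ≤ a → a ≤ b → f b ≤ f a := by
  intro a b ha hab
  induction b with
  | zero => exact absurd ha (by omega)
  | succ b ih =>
    rcases Nat.eq_or_lt_of_le hab with h | h
    · rw [h]
    · exact le_trans (hf.1 b (by omega)) (ih (by omega))

lemma height_le {n : ℕ} {f : ℕ → ℕ} (hf : IsPtn n f) : heightF n f ≤ n := by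
  unfold heightF
  calc ((Finset.Icc 1 n).filter fun i => f i ≠ 0).card
      ≤ (Finset.Icc 1 n).card := Finset.card_filter_le _ _
    _ = n := by rw [Nat.card_Icc]; omega

lemma height_char {n : ℕ} {f : ℕ → ℕ} (hf : IsPtn n f) :
    ∀ s, 1 ≤ s → (f s ≠ 0 ↔ s ≤ heightF n f) := by
  have hdc : ∀ u v, 1 ≤ v → v ≤ u →
      u ∈ (Finset.Icc 1 n).filter (fun k => f k ≠ 0) →
      v ∈ (Finset.Icc 1 n).filter (fun k => f k ≠ 0) := by
    intro u v h1 hvu hu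
    simp only [Finset.mem_filter, Finset.mem_Icc] at hu ⊢
    refine ⟨⟨h1, le_trans hvu hu.1.2⟩, ?_⟩
    intro h0
    have := ptn_mono hf v u h1 hvu
    exact hu.2 (by omega)
  intro s h1
  constructor
  · intro hs
    have hsn : s ≤ n := by
      by_contra hc
      exact hs (hf.2.2 s (by omega))
    have hsub : Finset.Icc 1 s ⊆ (Finset.Icc 1 n).filter (fun k => f k ≠ 0) := by
      intro v hv
      simp only [Finset.mem_Icc] at hv
      exact hdc s v hv.1 hv.2 (by simp only [Finset.mem_filter, Finset.mem_Icc]; exact ⟨⟨h1, hsn⟩, hs⟩)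
    have := Finset.card_le_card hsub
    rw [Nat.card_Icc] at this
    unfold heightF
    omega
  · intro hs
    by_contra h0
    have hsub : (Finset.Icc 1 n).filter (fun k => f k ≠ 0) ⊆ Finset.Ico 1 s := by
      intro u hu
      simp only [Finset.mem_Ico]
      have hu' := hu
      simp only [Finset.mem_filter, Finset.mem_Icc] at hu'
      refine ⟨hu'.1.1, ?_⟩
      by_contra hc
      push_neg at hc
      have := hdc u s h1 hc hu
      simp only [Finset.mem_filter, Finset.mem_Icc] at this
      exact this.2 h0
    have := Finset.card_le_card hsub
    rw [Nat.card_Ico] at this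
    unfold heightF at hs
    omega

lemma ptn_strict {n : ℕ} {f : ℕ → ℕ} (hf : IsPtn n f) (hreg : RegF 2 f) :
    ∀ s, 1 ≤ s → s ≤ heightF n f → f (s + 1) < f s := by
  intro s h1 hs
  have hns : f s ≠ 0 := (height_char hf s h1).mpr hs
  by_cases h0 : f (s + 1) = 0
  · omega
  · have h21 : s + 2 - 1 = s + 1 := rfl
    have hr := hreg s h1
    rw [h21] at hr
    have := hr h0
    have := hf.1 s h1
    omega

lemma natCast_zmod2_iff (a w : ℕ) (hw : w < 2) :
    ((a : ZMod 2) = (w : ZMod 2)) ↔ a % 2 = w := by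
  rw [ZMod.natCast_eq_natCast_iff]; unfold Nat.ModEq; omega

lemma resRem_cast (f : ℕ → ℕ) (s : ℕ) : resRem 2 f s = ((f s + s : ℕ) : ZMod 2) := by
  have hneg : ∀ x : ZMod 2, -x = x := by decide
  unfold resRem
  push_cast
  rw [sub_eq_add_neg, hneg]

lemma resAdd_cast (f : ℕ → ℕ) (s : ℕ) : resAdd 2 f s = ((f s + 1 + s : ℕ) : ZMod 2) := by
  have hneg : ∀ x : ZMod 2, -x = x := by decide
  unfold resAdd
  push_cast
  rw [sub_eq_add_neg, hneg]

lemma resRem_iff (f : ℕ → ℕ) (s : ℕ) (w : ℕ) (hw : w < 2) (j : ZMod 2)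
    (hjw : j = ((w : ℕ) : ZMod 2)) : resRem 2 f s = j ↔ (f s + s) % 2 = w := by
  rw [resRem_cast, hjw, natCast_zmod2_iff _ _ hw]

lemma resAdd_iff (f : ℕ → ℕ) (s : ℕ) (w : ℕ) (hw : w < 2) (j : ZMod 2)
    (hjw : j = ((w : ℕ) : ZMod 2)) : resAdd 2 f s = j ↔ (f s + 1 + s) % 2 = w := by
  rw [resAdd_cast, hjw, natCast_zmod2_iff _ _ hw]

/-- the number of rows `s ∈ [1,t]` whose removable-node parity class is `w`. -/
def NcntA (w : ℕ) (f : ℕ → ℕ) (t : ℕ) : ℕ :=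
  ((Finset.Icc 1 t).filter fun s => (f s + s) % 2 = w).card

/-- the prefix-sum "signature walk" for parity class `w`. -/
def SzA (w : ℕ) (f : ℕ → ℕ) (t : ℕ) : ℤ := 2 * (NcntA w f t : ℤ) - t

lemma NcntA_zero (w : ℕ) (f : ℕ → ℕ) : NcntA w f 0 = 0 := by
  unfold NcntA
  rw [show Finset.Icc 1 0 = ∅ from Finset.Icc_eq_empty (by omega)]
  simp

lemma SzA_zero (w : ℕ) (f : ℕ → ℕ) : SzA w f 0 = 0 := by
  unfold SzA
  rw [NcntA_zero]
  simp

lemma NcntA_succ (w : ℕ) (f : ℕ → ℕ) (t : ℕ) :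
    NcntA w f (t + 1) = NcntA w f t + (if (f (t + 1) + (t + 1)) % 2 = w then 1 else 0) := by
  unfold NcntA
  have he : Finset.Icc 1 (t + 1) = insert (t + 1) (Finset.Icc 1 t) := by
    ext x
    simp only [Finset.mem_Icc, Finset.mem_insert]
    omega
  rw [he, Finset.filter_insert]
  by_cases hp : (f (t + 1) + (t + 1)) % 2 = w
  · rw [if_pos hp, if_pos hp, Finset.card_insert_of_notMem]
    intro hmem
    simp only [Finset.mem_filter, Finset.mem_Icc] at hmem
    omega
  · rw [if_neg hp, if_neg hp]
    omega

lemma SzA_succ (w : ℕ) (f : ℕ → ℕ) (t : ℕ) :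
    SzA w f (t + 1) = SzA w f t + (if (f (t + 1) + (t + 1)) % 2 = w then 1 else -1) := by
  unfold SzA
  rw [NcntA_succ]
  by_cases hp : (f (t + 1) + (t + 1)) % 2 = w
  · rw [if_pos hp, if_pos hp]; push_cast; ring
  · rw [if_neg hp, if_neg hp]; push_cast; ring

lemma NcntA_compl {w : ℕ} (hw : w < 2) (f : ℕ → ℕ) (t : ℕ) :
    NcntA w f t + NcntA (1 - w) f t = t := by
  unfold NcntA
  have h1 : ((Finset.Icc 1 t).filter fun s => (f s + s) % 2 = 1 - w)
      = ((Finset.Icc 1 t).filter fun s => ¬ ((f s + s) % 2 = w)) :=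
    Finset.filter_congr (fun x _ => by constructor <;> intro h <;> omega)
  rw [h1, Finset.card_filter_add_card_filter_not, Nat.card_Icc]
  omega

lemma SzA_ivt (w : ℕ) (f : ℕ → ℕ) :
    ∀ b (v : ℤ), 0 ≤ v → v ≤ SzA w f b → ∃ t, t ≤ b ∧ SzA w f t = v := by
  intro b
  induction b with
  | zero =>
    intro v h0 h1
    rw [SzA_zero] at h1
    exact ⟨0, le_rfl, by rw [SzA_zero]; omega⟩
  | succ b ih =>
    intro v h0 h1
    by_cases hle : v ≤ SzA w f b
    · obtain ⟨t, ht, he⟩ := ih v h0 hle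
      exact ⟨t, by omega, he⟩
    · push_neg at hle
      have hs := SzA_succ w f b
      have : SzA w f (b + 1) = v := by
        by_cases hp : (f (b + 1) + (b + 1)) % 2 = w
        · rw [if_pos hp] at hs; omega
        · rw [if_neg hp] at hs; omega
      exact ⟨b + 1, le_rfl, this⟩

lemma cs_rem {n : ℕ} {f : ℕ → ℕ} (hf : IsPtn n f) (hreg : RegF 2 f)
    (w : ℕ) (hw : w < 2) (j : ZMod 2) (hjw : j = ((w : ℕ) : ZMod 2))
    (a b : ℕ) (ha : 1 ≤ a) (hab : a ≤ b) (hb : b - 1 ≤ heightF n f) :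
    NcntA w f (a - 1) + ((Finset.Ico a b).filter fun s => Rem f s ∧ resRem 2 f s = j).card
      = NcntA w f (b - 1) := by
  have hcongr : ((Finset.Ico a b).filter fun s => Rem f s ∧ resRem 2 f s = j)
      = ((Finset.Ico a b).filter fun s => (f s + s) % 2 = w) := by
    refine Finset.filter_congr ?_
    intro x hx
    simp only [Finset.mem_Ico] at hx
    have h1 : 1 ≤ x := by omega
    have hxh : x ≤ heightF n f := by omega
    constructor
    · rintro ⟨-, hr⟩
      exact (resRem_iff f x w hw j hjw).mp hr
    · intro hp
      exact ⟨⟨h1, ptn_strict hf hreg x h1 hxh⟩, (resRem_iff f x w hw j hjw).mpr hp⟩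
  rw [hcongr]
  unfold NcntA
  have hsplit : Finset.Icc 1 (b - 1) = Finset.Icc 1 (a - 1) ∪ Finset.Ico a b := by
    ext x
    simp only [Finset.mem_Icc, Finset.mem_union, Finset.mem_Ico]
    omega
  have hdisj : Disjoint (Finset.Icc 1 (a - 1)) (Finset.Ico a b) := by
    rw [Finset.disjoint_left]
    intro x hx hx'
    simp only [Finset.mem_Icc] at hx
    simp only [Finset.mem_Ico] at hx'
    omega
  rw [hsplit, Finset.filter_union,
    Finset.card_union_of_disjoint (Finset.disjoint_filter_filter hdisj)]

lemma cs_add {n : ℕ} {f : ℕ → ℕ} (hf : IsPtn n f) (hreg : RegF 2 f)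
    (w : ℕ) (hw : w < 2) (j : ZMod 2) (hjw : j = ((w : ℕ) : ZMod 2))
    (a b : ℕ) (ha : 1 ≤ a) (hab : a ≤ b) (hb : b - 1 ≤ heightF n f) :
    NcntA (1 - w) f (a - 1) + ((Finset.Ico a b).filter fun s => Addb f s ∧ resAdd 2 f s = j).card
      = NcntA (1 - w) f (b - 1) := by
  have hcongr : ((Finset.Ico a b).filter fun s => Addb f s ∧ resAdd 2 f s = j)
      = ((Finset.Ico a b).filter fun s => (f s + s) % 2 = 1 - w) := by
    refine Finset.filter_congr ?_
    intro x hx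
    simp only [Finset.mem_Ico] at hx
    have h1 : 1 ≤ x := by omega
    have hxh : x ≤ heightF n f := by omega
    constructor
    · rintro ⟨-, hr⟩
      have := (resAdd_iff f x w hw j hjw).mp hr
      omega
    · intro hp
      refine ⟨⟨h1, ?_⟩, (resAdd_iff f x w hw j hjw).mpr (by omega)⟩
      by_cases hx1 : x = 1
      · exact Or.inl hx1
      · right
        obtain ⟨y, rfl⟩ : ∃ y, x = y + 1 := ⟨x - 1, by omega⟩
        have hy1 : 1 ≤ y := by omega
        have hyh : y ≤ heightF n f := by omega
        have := ptn_strict hf hreg y hy1 hyh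
        simpa using this
  rw [hcongr]
  unfold NcntA
  have hsplit : Finset.Icc 1 (b - 1) = Finset.Icc 1 (a - 1) ∪ Finset.Ico a b := by
    ext x
    simp only [Finset.mem_Icc, Finset.mem_union, Finset.mem_Ico]
    omega
  have hdisj : Disjoint (Finset.Icc 1 (a - 1)) (Finset.Ico a b) := by
    rw [Finset.disjoint_left]
    intro x hx hx'
    simp only [Finset.mem_Icc] at hx
    simp only [Finset.mem_Ico] at hx'
    omega
  rw [hsplit, Finset.filter_union,
    Finset.card_union_of_disjoint (Finset.disjoint_filter_filter hdisj)]

lemma mk_normal {n : ℕ} {f : ℕ → ℕ} (hf : IsPtn n f) (hreg : RegF 2 f)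
    (w : ℕ) (hw : w < 2) (j : ZMod 2) (hjw : j = ((w : ℕ) : ZMod 2))
    (t : ℕ) (hth : t ≤ heightF n f) (v : ℤ) (hv : 1 ≤ v)
    (hval : SzA w f t = v) (hmin : ∀ u, u < t → SzA w f u < v) :
    NormalN 2 f j t := by
  have ht1 : 1 ≤ t := by
    rcases Nat.eq_zero_or_pos t with h | h
    · exfalso; rw [h, SzA_zero] at hval; omega
    · exact h
  obtain ⟨t', rfl⟩ : ∃ t', t = t' + 1 := ⟨t - 1, by omega⟩
  have hs := SzA_succ w f t'
  have hmt' := hmin t' (by omega)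
  have hres : (f (t' + 1) + (t' + 1)) % 2 = w := by
    by_contra hq
    rw [if_neg hq] at hs
    omega
  rw [if_pos hres] at hs
  refine ⟨⟨ht1, ptn_strict hf hreg (t' + 1) ht1 hth⟩,
    (resRem_iff f (t' + 1) w hw j hjw).mpr hres, ?_⟩
  intro r' h1' h2'
  have e1 := cs_rem hf hreg w hw j hjw r' (t' + 1) h1' (by omega) (by simp; omega)
  have e2 := cs_add hf hreg w hw j hjw r' (t' + 1) h1' (by omega) (by simp; omega)
  have e3 := NcntA_compl hw f (r' - 1)
  have e4 := NcntA_compl hw f t'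
  simp only [Nat.add_sub_cancel] at e1 e2
  have hm2 := hmin (r' - 1) (by omega)
  unfold SzA at hs hval hm2
  omega

lemma lemE {n : ℕ} {f : ℕ → ℕ} (hf : IsPtn n f) (hreg : RegF 2 f)
    (w : ℕ) (hw : w < 2) (j : ZMod 2) (hjw : j = ((w : ℕ) : ZMod 2))
    (t₀ : ℕ) (ht : t₀ ≤ heightF n f) : SzA w f t₀ ≤ (epsN 2 n f j : ℤ) := by
  by_cases hM : SzA w f t₀ ≤ 0
  · exact le_trans hM (Int.natCast_nonneg _)
  push_neg at hM
  classical
  have hexP : ∀ v : ℕ, ∃ t, (SzA w f t = (v : ℤ) ∧ t ≤ t₀) ∨ ¬(1 ≤ v ∧ (v : ℤ) ≤ SzA w f t₀) := by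
    intro v
    by_cases hv : 1 ≤ v ∧ (v : ℤ) ≤ SzA w f t₀
    · obtain ⟨t, h3, h4⟩ := SzA_ivt w f t₀ (v : ℤ) (by positivity) hv.2
      exact ⟨t, Or.inl ⟨h4, h3⟩⟩
    · exact ⟨0, Or.inr hv⟩
  have hFspec : ∀ v : ℕ, 1 ≤ v → (v : ℤ) ≤ SzA w f t₀ →
      SzA w f (Nat.find (hexP v)) = (v : ℤ) ∧ Nat.find (hexP v) ≤ t₀ ∧
        ∀ u, u < Nat.find (hexP v) → SzA w f u < (v : ℤ) := by
    intro v h1 h2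
    have hsp := Nat.find_spec (hexP v)
    rcases hsp with ⟨hval, hle⟩ | hbad
    · refine ⟨hval, hle, ?_⟩
      intro u hu
      by_contra hge
      push_neg at hge
      obtain ⟨u', hu', he'⟩ := SzA_ivt w f u (v : ℤ) (by positivity) hge
      exact Nat.find_min (hexP v) (show u' < Nat.find (hexP v) by omega) (Or.inl ⟨he', by omega⟩)
    · exact absurd ⟨h1, h2⟩ hbad
  have hmem : ∀ v : ℕ, 1 ≤ v → (v : ℤ) ≤ SzA w f t₀ →
      Nat.find (hexP v) ∈ (Finset.Icc 1 n).filter fun r => NormalN 2 f j r := by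
    intro v h1 h2
    obtain ⟨hval, hle, hmin⟩ := hFspec v h1 h2
    have hN := mk_normal hf hreg w hw j hjw (Nat.find (hexP v)) (by omega) (v : ℤ)
      (by exact_mod_cast h1) hval hmin
    simp only [Finset.mem_filter, Finset.mem_Icc]
    exact ⟨⟨hN.1.1, by have := height_le hf; omega⟩, hN⟩
  have hcard : (Finset.Icc 1 (SzA w f t₀).toNat).card ≤
      ((Finset.Icc 1 n).filter fun r => NormalN 2 f j r).card := by
    apply Finset.card_le_card_of_injOn (fun v : ℕ => Nat.find (hexP v))
    · intro v hv
      simp only [Finset.coe_Icc, Set.mem_Icc] at hv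
      exact hmem v hv.1 (by omega)
    · intro v1 hv1 v2 hv2 he
      simp only [Finset.coe_Icc, Set.mem_Icc] at hv1 hv2
      have e1 := (hFspec v1 hv1.1 (by omega)).1
      have e2 := (hFspec v2 hv2.1 (by omega)).1
      simp only at he
      rw [he] at e1
      omega
  rw [Nat.card_Icc] at hcard
  unfold epsN
  omega

lemma lrev {n : ℕ} {f : ℕ → ℕ} (hf : IsPtn n f) (hreg : RegF 2 f)
    (w : ℕ) (hw : w < 2) (j : ZMod 2) (hjw : j = ((w : ℕ) : ZMod 2))
    (u : ℕ) (hu : NormalN 2 f j u) :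
    1 ≤ u ∧ u ≤ heightF n f ∧ 1 ≤ SzA w f u := by
  obtain ⟨⟨h1, hlt⟩, hres, hcond⟩ := hu
  have hne : f u ≠ 0 := by omega
  have huh : u ≤ heightF n f := (height_char hf u h1).mp hne
  have hPu : (f u + u) % 2 = w := (resRem_iff f u w hw j hjw).mp hres
  refine ⟨h1, huh, ?_⟩
  obtain ⟨u', rfl⟩ : ∃ u', u = u' + 1 := ⟨u - 1, by omega⟩
  have hs := SzA_succ w f u'
  rw [if_pos hPu] at hs
  have hS0 : 0 ≤ SzA w f u' := by
    rcases Nat.eq_zero_or_pos u' with h | h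
    · rw [h, SzA_zero]
    · have hc := hcond 1 le_rfl (by omega)
      have e1 := cs_rem hf hreg w hw j hjw 1 (u' + 1) le_rfl (by omega) (by simp; omega)
      have e2 := cs_add hf hreg w hw j hjw 1 (u' + 1) le_rfl (by omega) (by simp; omega)
      have e3 := NcntA_compl hw f u'
      have e01 := NcntA_zero w f
      have e02 := NcntA_zero (1 - w) f
      simp only [Nat.add_sub_cancel, Nat.sub_self] at e1 e2
      unfold SzA
      omega
  omega

end Aux

theorem stmt11 (n : ℕ) (f : ℕ → ℕ) (hf : IsPtn n f) (hreg : RegF 2 f)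
    (htwo : epsN 2 n f 0 + epsN 2 n f 1 = 2)
    (i : ZMod 2) (heps : 0 < epsN 2 n f i) (hphi : 0 < phiN 2 n f i)
    (rB rC : ℕ) (hgood : GoodN 2 f i rB) (hcogood : CogoodN 2 f i rC)
    (hsing : ¬ RegF 2 (fun s => if s = rB then f rB - 1 else if s = rC then f rC + 1 else f s)) :
    (3 ≤ heightF n f ∧ ∃ j : ℕ, 1 ≤ j ∧ j < heightF n f ∧ f j = f (j + 1) + 2 ∧
      (∀ k, 1 ≤ k → k + 1 < j → f k % 2 = f (k + 1) % 2) ∧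
      (2 ≤ j → f (j - 1) % 2 ≠ f j % 2) ∧
      f j % 2 = f (j + 1) % 2 ∧
      (j + 2 ≤ heightF n f → f (j + 1) % 2 ≠ f (j + 2) % 2) ∧
      (∀ k, j + 2 ≤ k → k + 1 ≤ heightF n f → f k % 2 = f (k + 1) % 2)) ∨
    ((∀ k, 1 ≤ k → k < heightF n f → f k % 2 = 1) ∧ f (heightF n f) = 2) := by
  classical
  obtain ⟨hgdN, hgdMax⟩ := hgood
  obtain ⟨hremB, hresB, hcondB⟩ := hgdN
  obtain ⟨hcgN, hcgMin⟩ := hcogood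
  obtain ⟨haddC, hresC, hcondC⟩ := hcgN
  have hrB1 : 1 ≤ rB := hremB.1
  have hfB0 : f rB ≠ 0 := by have := hremB.2; omega
  have hrBh : rB ≤ heightF n f := (height_char hf rB hrB1).mp hfB0
  have hrC1 : 1 ≤ rC := haddC.1
  have hhn : heightF n f ≤ n := height_le hf
  have hrCh : rC ≤ heightF n f + 1 := by
    rcases haddC.2 with h | h
    · omega
    · by_contra hcon
      push_neg at hcon
      have h1 : f rC = 0 := by
        by_contra h0
        have := (height_char hf rC (by omega)).mp h0
        omega
      have h2 : f (rC - 1) = 0 := by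
        by_contra h0
        have := (height_char hf (rC - 1) (by omega)).mp h0
        omega
      omega
  obtain ⟨iv, hiv, hisym⟩ : ∃ iv : ℕ, iv < 2 ∧ i = ((iv : ℕ) : ZMod 2) := by
    have h01 : ∀ x : ZMod 2, x = ((0 : ℕ) : ZMod 2) ∨ x = ((1 : ℕ) : ZMod 2) := by decide
    rcases h01 i with h | h
    · exact ⟨0, by omega, h⟩
    · exact ⟨1, by omega, h⟩
  have hisym2 : i + 1 = (((1 - iv : ℕ)) : ZMod 2) := by
    interval_cases iv
    · rw [hisym]; decide
    · rw [hisym]; decide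
  have hPrB : (f rB + rB) % 2 = iv := (resRem_iff f rB iv hiv i hisym).mp hresB
  have hPArC : (f rC + 1 + rC) % 2 = iv := (resAdd_iff f rC iv hiv i hisym).mp hresC
  have hBC : rB ≠ rC := by
    intro he
    rw [he] at hPrB
    omega
  -- Step 2: singularity forces the move to happen at adjacent rows with gap 2
  have hstep2 : rC = rB + 1 ∧ f rB = f (rB + 1) + 2 := by
    unfold RegF at hsing
    push_neg at hsing
    obtain ⟨s, hs1, hs2, hs3⟩ := hsing
    have he21 : s + 2 - 1 = s + 1 := rfl
    rw [he21] at hs2 hs3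
    by_cases hsB : s = rB
    · subst s
      rw [if_pos rfl, if_neg (by omega : ¬ rB + 1 = rB)] at hs3
      by_cases hC : rB + 1 = rC
      · rw [if_pos hC] at hs3
        refine ⟨hC.symm, ?_⟩
        rw [← hC] at hs3
        omega
      · rw [if_neg hC] at hs3
        rw [if_neg (by omega : ¬ rB + 1 = rB), if_neg hC] at hs2
        exfalso
        have hsh1 : rB + 1 ≤ heightF n f := (height_char hf (rB + 1) (by omega)).mp hs2
        have hnorm : NormalN 2 f i (rB + 1) := by
          refine ⟨⟨by omega, ptn_strict hf hreg (rB + 1) (by omega) hsh1⟩, ?_, ?_⟩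
          · rw [resRem_iff f (rB + 1) iv hiv i hisym]
            omega
          · intro r' h1' h2'
            by_cases hr : r' = rB
            · have hone : Finset.Ico r' (rB + 1) = {rB} := by
                rw [hr]; exact Nat.Ico_succ_singleton rB
              rw [hone]
              have hemp : ({rB} : Finset ℕ).filter (fun x => Addb f x ∧ resAdd 2 f x = i) = ∅ := by
                rw [Finset.filter_singleton, if_neg]
                rintro ⟨-, hra⟩
                rw [resAdd_iff f rB iv hiv i hisym] at hra
                omega
              rw [hemp]
              simp
            · have hlt : r' < rB := by omega
              have hins : Finset.Ico r' (rB + 1) = insert rB (Finset.Ico r' rB) := by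
                ext x
                simp only [Finset.mem_Ico, Finset.mem_insert]
                omega
              have hA' : ¬ (Addb f rB ∧ resAdd 2 f rB = i) := by
                rintro ⟨-, hra⟩
                rw [resAdd_iff f rB iv hiv i hisym] at hra
                omega
              have hR' : Rem f rB ∧ resRem 2 f rB = i := ⟨hremB, hresB⟩
              rw [hins, Finset.filter_insert, Finset.filter_insert, if_neg hA', if_pos hR',
                Finset.card_insert_of_notMem (by
                  intro hmem
                  simp only [Finset.mem_filter, Finset.mem_Ico] at hmem
                  omega)]
              exact Nat.le_succ_of_le (hcondB r' h1' hlt)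
        have := hgdMax (rB + 1) hnorm
        omega
    · by_cases hsC : s = rC
      · subst s
        rw [if_neg hsB, if_pos rfl] at hs3
        by_cases hB : rC + 1 = rB
        · rw [if_pos hB] at hs3
          rw [if_pos hB] at hs2
          exfalso
          have hmono := ptn_mono hf rC rB hrC1 (by omega)
          omega
        · rw [if_neg hB, if_neg (by omega : ¬ rC + 1 = rC)] at hs3
          exfalso
          rw [if_neg hB, if_neg (by omega : ¬ rC + 1 = rC)] at hs2
          have := hf.1 rC hrC1
          omega
      · by_cases hs1C : s + 1 = rC
        · rw [if_neg hsB, if_neg hsC, if_neg (by omega : ¬ s + 1 = rB), if_pos hs1C] at hs3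
          exfalso
          have hrC2 : 2 ≤ rC := by omega
          have hseq : s = rC - 1 := by omega
          have hfe : f (rC - 1) = f rC + 1 := by rw [← hseq]; exact hs3
          have hCm1h : rC - 1 ≤ heightF n f :=
            (height_char hf (rC - 1) (by omega)).mp (by omega)
          have hconm : ConormalN 2 f i (rC - 1) := by
            refine ⟨⟨by omega, ?_⟩, ?_, ?_⟩
            · by_cases h1C : rC - 1 = 1
              · exact Or.inl h1C
              · right
                obtain ⟨y, hy⟩ : ∃ y, rC - 1 = y + 1 := ⟨rC - 2, by omega⟩
                have hst := ptn_strict hf hreg y (by omega) (by omega)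
                rw [← hy] at hst
                rw [show rC - 1 - 1 = y from by omega]
                exact hst
            · rw [resAdd_iff f (rC - 1) iv hiv i hisym]
              omega
            · intro r' hr'
              have hins : Finset.Ioc (rC - 1) r' = insert rC (Finset.Ioc rC r') := by
                ext x
                simp only [Finset.mem_Ioc, Finset.mem_insert]
                omega
              have hAq : Addb f rC ∧ resAdd 2 f rC = i := ⟨haddC, hresC⟩
              have hRq : ¬ (Rem f rC ∧ resRem 2 f rC = i) := by
                rintro ⟨-, hrr⟩
                rw [resRem_iff f rC iv hiv i hisym] at hrr
                omega
              rw [hins, Finset.filter_insert, Finset.filter_insert, if_neg hRq, if_pos hAq,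
                Finset.card_insert_of_notMem (by
                  intro hmem
                  simp only [Finset.mem_filter, Finset.mem_Ioc] at hmem
                  omega)]
              by_cases hrr2 : rC < r'
              · exact Nat.le_succ_of_le (hcondC r' hrr2)
              · rw [show r' = rC from by omega]
                simp
          have := hcgMin (rC - 1) hconm
          omega
        · by_cases hs1B : s + 1 = rB
          · rw [if_neg hsB, if_neg hsC, if_pos hs1B] at hs3
            rw [if_pos hs1B] at hs2
            exfalso
            have hmono := ptn_mono hf s rB (by omega) (by omega)
            omega
          · rw [if_neg hsB, if_neg hsC, if_neg hs1B, if_neg hs1C] at hs3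
            rw [if_neg hs1B, if_neg hs1C] at hs2
            exfalso
            have hsh1 : s + 1 ≤ heightF n f := (height_char hf (s + 1) (by omega)).mp hs2
            have := ptn_strict hf hreg s (by omega) (by omega)
            omega
  obtain ⟨rCeq, hgap⟩ := hstep2
  subst rCeq
  -- Step 3: signature-walk analysis
  have hP1ne : ¬ ((f (rB + 1) + (rB + 1)) % 2 = iv) := by omega
  have hSr : SzA iv f rB = SzA iv f (rB - 1) + 1 := by
    obtain ⟨rB', hE⟩ : ∃ rB', rB = rB' + 1 := ⟨rB - 1, by omega⟩
    have hs := SzA_succ iv f rB'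
    rw [if_pos (by rw [← hE]; exact hPrB)] at hs
    rw [hE, show rB' + 1 - 1 = rB' from by omega]
    exact hs
  have hSr1 : SzA iv f (rB + 1) = SzA iv f rB - 1 := by
    have hs := SzA_succ iv f rB
    rw [if_neg hP1ne] at hs
    omega
  have hsum : (epsN 2 n f i : ℤ) + (epsN 2 n f (i + 1) : ℤ) = 2 := by
    have h01 : ∀ x : ZMod 2, x = 0 ∨ x = 1 := by decide
    rcases h01 i with h | h
    · rw [h, show (0 : ZMod 2) + 1 = 1 from by decide]
      exact_mod_cast htwo
    · rw [h, show (1 : ZMod 2) + 1 = 0 from by decide]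
      omega
  have hA : ∀ t, t < rB → SzA iv f t ≤ SzA iv f (rB - 1) := by
    intro t htr
    rcases Nat.eq_or_lt_of_le (show t ≤ rB - 1 by omega) with h | h
    · rw [h]
    · have hkey := hcondB (t + 1) (by omega) (by omega)
      have e1 := cs_rem hf hreg iv hiv i hisym (t + 1) rB (by omega) (by omega) (by omega)
      have e2 := cs_add hf hreg iv hiv i hisym (t + 1) rB (by omega) (by omega) (by omega)
      have e3 := NcntA_compl hiv f t
      have e4 := NcntA_compl hiv f (rB - 1)
      simp only [Nat.add_sub_cancel] at e1 e2
      unfold SzA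
      omega
  have hB : ∀ t, rB + 1 < t → t ≤ heightF n f → SzA iv f t ≤ SzA iv f (rB + 1) := by
    intro t h1 h2
    have hkey := hcondC t h1
    have hIoc : Finset.Ioc (rB + 1) t = Finset.Ico (rB + 2) (t + 1) := by
      ext x
      simp only [Finset.mem_Ioc, Finset.mem_Ico]
      omega
    rw [hIoc] at hkey
    have e1 := cs_rem hf hreg iv hiv i hisym (rB + 2) (t + 1) (by omega) (by omega) (by omega)
    have e2 := cs_add hf hreg iv hiv i hisym (rB + 2) (t + 1) (by omega) (by omega) (by omega)
    have e3 := NcntA_compl hiv f (rB + 1)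
    have e4 := NcntA_compl hiv f t
    simp only [Nat.add_sub_cancel, show rB + 2 - 1 = rB + 1 from by omega] at e1 e2
    unfold SzA
    omega
  have hC : ∀ t, t ≤ heightF n f → SzA iv f rB - SzA iv f t ≤ 2 := by
    intro t ht2
    have h1 := lemE hf hreg iv hiv i hisym rB hrBh
    have h2 := lemE hf hreg (1 - iv) (by omega) (i + 1) hisym2 t ht2
    have h3 := NcntA_compl hiv f t
    unfold SzA at h1 h2 ⊢
    omega
  have hW : ∀ t, t ≤ heightF n f → t ≠ rB →
      SzA iv f rB - 2 ≤ SzA iv f t ∧ SzA iv f t ≤ SzA iv f rB - 1 := by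
    intro t ht2 htne
    have hc := hC t ht2
    by_cases hlt : t < rB
    · have := hA t hlt
      omega
    · by_cases heq2 : t = rB + 1
      · rw [heq2]
        omega
      · have := hB t (by omega) ht2
        omega
  have hM1 : 1 ≤ SzA iv f rB := by
    have h0 := SzA_zero iv f
    have := hA 0 (by omega)
    omega
  have halt : ∀ k, 1 ≤ k → k + 1 ≤ heightF n f → k - 1 ≠ rB → k ≠ rB → k + 1 ≠ rB →
      f k % 2 = f (k + 1) % 2 := by
    intro k h1 h2 hn1 hn2 hn3
    have w1 := hW (k - 1) (by omega) hn1
    have w3 := hW (k + 1) h2 hn3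
    obtain ⟨k', rfl⟩ : ∃ k', k = k' + 1 := ⟨k - 1, by omega⟩
    simp only [Nat.add_sub_cancel] at w1
    have s1 := SzA_succ iv f k'
    have s2 := SzA_succ iv f (k' + 1)
    by_cases p1 : (f (k' + 1) + (k' + 1)) % 2 = iv <;>
      by_cases p2 : (f (k' + 1 + 1) + (k' + 1 + 1)) % 2 = iv
    · rw [if_pos p1] at s1; rw [if_pos p2] at s2; omega
    · rw [if_pos p1] at s1; rw [if_neg p2] at s2; omega
    · rw [if_neg p1] at s1; rw [if_pos p2] at s2; omega
    · rw [if_neg p1] at s1; rw [if_neg p2] at s2; omega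
  have claim2 : 2 ≤ rB → f (rB - 1) % 2 ≠ f rB % 2 := by
    intro h2
    have w2 := hW (rB - 2) (by omega) (by omega)
    obtain ⟨r', hE⟩ : ∃ r', rB - 1 = r' + 1 := ⟨rB - 2, by omega⟩
    have s1 := SzA_succ iv f r'
    rw [← hE] at s1
    rw [show r' = rB - 2 from by omega] at s1
    by_cases p1 : (f (rB - 1) + (rB - 1)) % 2 = iv
    · omega
    · rw [if_neg p1] at s1
      omega
  have claim4 : rB + 2 ≤ heightF n f → f (rB + 1) % 2 ≠ f (rB + 2) % 2 := by
    intro h2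
    have w2 := hW (rB + 2) h2 (by omega)
    have s2 := SzA_succ iv f (rB + 1)
    rw [show rB + 1 + 1 = rB + 2 from rfl] at s2
    by_cases p2 : (f (rB + 2) + (rB + 2)) % 2 = iv
    · rw [if_pos p2] at s2
      omega
    · omega
  by_cases hrlt : rB < heightF n f
  · left
    have h3 : 3 ≤ heightF n f := by
      by_cases h2B : 2 ≤ rB
      · omega
      · have hsumN : epsN 2 n f i + epsN 2 n f (i + 1) = 2 := by exact_mod_cast hsum
        have heps1 : epsN 2 n f i ≤ 1 := by
          unfold epsN
          calc ((Finset.Icc 1 n).filter fun r => NormalN 2 f i r).card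
              ≤ ({rB} : Finset ℕ).card := by
                apply Finset.card_le_card
                intro x hx
                simp only [Finset.mem_filter, Finset.mem_Icc] at hx
                have := hgdMax x hx.2
                simp only [Finset.mem_singleton]
                omega
            _ = 1 := Finset.card_singleton rB
        have heps2 : 1 ≤ epsN 2 n f (i + 1) := by omega
        have hne : ((Finset.Icc 1 n).filter fun r => NormalN 2 f (i + 1) r).Nonempty := by
          rw [← Finset.card_pos]
          unfold epsN at heps2
          omega
        obtain ⟨u, hu⟩ := hne
        simp only [Finset.mem_filter, Finset.mem_Icc] at hu
        obtain ⟨hu1, huh, huS⟩ := lrev hf hreg (1 - iv) (by omega) (i + 1) hisym2 u hu.2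
        have hcompl := NcntA_compl hiv f u
        have hSu : SzA iv f u ≤ -1 := by
          unfold SzA at huS ⊢
          omega
        have hS1 : SzA iv f 1 = SzA iv f 0 + 1 := by
          have hs := SzA_succ iv f 0
          rw [if_pos (by rw [show (0 : ℕ) + 1 = rB from by omega]; exact hPrB)] at hs
          rw [show (0 : ℕ) + 1 = 1 from rfl] at hs
          exact hs
        have hS2 := SzA_succ iv f 1
        have h00 := SzA_zero iv f
        by_cases hu1' : u = 1
        · rw [hu1'] at hSu; omega
        · by_cases hu2 : u = 2
          · rw [hu2] at hSu
            rw [show (1 : ℕ) + 1 = 2 from rfl] at hS2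
            by_cases pp : (f 2 + 2) % 2 = iv
            · rw [if_pos pp] at hS2; omega
            · rw [if_neg pp] at hS2; omega
          · omega
    refine ⟨h3, rB, hrB1, hrlt, hgap, ?_, claim2, by omega, claim4, ?_⟩
    · intro k hk1 hk2
      exact halt k hk1 (by omega) (by omega) (by omega) (by omega)
    · intro k hk1 hk2
      exact halt k (by omega) hk2 (by omega) (by omega) (by omega)
  · right
    have hrBeq : rB = heightF n f := by omega
    have hfh0 : f (rB + 1) = 0 := by
      by_contra h0
      have := (height_char hf (rB + 1) (by omega)).mp h0
      omega
    have hfB2 : f rB = 2 := by omega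
    rw [← hrBeq]
    constructor
    · have hmain : ∀ d k, 1 ≤ k → k < rB → rB - 1 - k = d → f k % 2 = 1 := by
        intro d
        induction d with
        | zero =>
          intro k hk1 hk2 hk3
          have hc2 := claim2 (by omega)
          rw [show k = rB - 1 from by omega]
          omega
        | succ d ih =>
          intro k hk1 hk2 hk3
          have h4 : k + 1 < rB := by omega
          have hpar := halt k hk1 (by omega) (by omega) (by omega) (by omega)
          have := ih (k + 1) (by omega) (by omega) (by omega)
          omega
      intro k hk1 hk2
      exact hmain (rB - 1 - k) k hk1 hk2 rfl
    · exact hfB2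
end
end

section
/- Let p = 2, λ a 2-regular partition of n, and i ∈ {0,1} a residue. If ε_i(λ) = 2, ε_{1−i}(λ) = 0 and φ_i(λ) = 0, then n is odd. -/
/-!
STATEMENT 12: Let `p = 2`, `λ` a `2`-regular partition of `n`, and `i ∈ {0,1}` a residue.
If `ε_i(λ) = 2`, `ε_{1-i}(λ) = 0` and `φ_i(λ) = 0`, then `n` is odd.
-/

noncomputable section

open scoped Classical

lemma z_ne (c j : ZMod 2) : ¬(c = j) ↔ c = j + 1 := by revert c j; decide
lemma z_add (c j : ZMod 2) : c + 1 = j ↔ ¬(c = j) := by revert c j; decide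
lemma z_add' (c j : ZMod 2) : c + 1 = 1 - j ↔ c = j := by revert c j; decide
lemma z_sub (c j : ZMod 2) : c = 1 - j ↔ ¬(c = j) := by revert c j; decide
lemma z_one (j : ZMod 2) : ¬(j = 0) → j = 1 := by revert j; decide
lemma z_neg (x : ZMod 2) : (0:ZMod 2) + 1 - (x + 1) = x := by revert x; decide

lemma resAdd_eq (p : ℕ) (f : ℕ → ℕ) (s : ℕ) : resAdd p f s = resRem p f s + 1 := by
  unfold resAdd resRem; ring

def Pw (f : ℕ → ℕ) (i : ZMod 2) (k : ℕ) : ℤ :=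
  ∑ s ∈ Finset.Ico 1 (k+1), (if resRem 2 f s = i then (1:ℤ) else -1)

lemma Pw_zero (f : ℕ → ℕ) (i : ZMod 2) : Pw f i 0 = 0 := by simp [Pw]

lemma Pw_succ (f : ℕ → ℕ) (i : ZMod 2) (k : ℕ) :
    Pw f i (k+1) = Pw f i k + (if resRem 2 f (k+1) = i then (1:ℤ) else -1) := by
  unfold Pw
  rw [Finset.sum_Ico_succ_top (by omega)]

lemma sum_pm (T : Finset ℕ) (p : ℕ → Prop) [DecidablePred p] :
    ∑ s ∈ T, (if p s then (1:ℤ) else -1)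
      = ((T.filter p).card : ℤ) - ((T.filter fun s => ¬ p s).card : ℤ) := by
  rw [Finset.sum_ite, Finset.sum_const, Finset.sum_const]
  simp [nsmul_eq_mul]
  ring

lemma Pw_window (f : ℕ → ℕ) (i : ZMod 2) (a b : ℕ) (ha : 1 ≤ a) (hab : a ≤ b) :
    ∑ s ∈ Finset.Ico a b, (if resRem 2 f s = i then (1:ℤ) else -1)
      = Pw f i (b-1) - Pw f i (a-1) := by
  have h1 : a - 1 + 1 = a := by omega
  have h2 : b - 1 + 1 = b := by omega
  unfold Pw
  rw [h1, h2, ← Finset.sum_Ico_consecutive _ ha hab]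
  ring

lemma gauss_even : ∀ m : ℕ, ∑ r ∈ Finset.Icc 1 (2*m), r = m * (2*m+1) := by
  intro m
  induction m with
  | zero => simp
  | succ m IH =>
    have e : 2*(m+1) = (2*m+1)+1 := by ring
    rw [e, Finset.sum_Icc_succ_top (by omega), Finset.sum_Icc_succ_top (by omega), IH]
    ring


theorem stmt12 (n : ℕ) (f : ℕ → ℕ) (hf : IsPtn n f) (hreg : RegF 2 f) (i : ZMod 2)
    (h1 : epsN 2 n f i = 2) (h2 : epsN 2 n f (1 - i) = 0) (h3 : phiN 2 n f i = 0) :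
    Odd n := by
  set h := heightF n f with hh
  have mono : ∀ a b : ℕ, 1 ≤ a → a ≤ b → f b ≤ f a := by
    intro a b ha hab
    induction b, hab using Nat.le_induction with
    | base => exact le_refl _
    | succ b hb IH => exact le_trans (hf.1 b (le_trans ha hb)) IH
  have hSle : h ≤ n := by
    rw [hh]
    exact le_trans (Finset.card_filter_le _ _) (by simp [Nat.card_Icc])
  have L1a : ∀ r, 1 ≤ r → r ≤ h → f r ≠ 0 := by
    intro r h1' h2' hz
    have hsub : ((Finset.Icc 1 n).filter fun s => f s ≠ 0) ⊆ Finset.Icc 1 (r-1) := by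
      intro s hs
      simp only [Finset.mem_filter, Finset.mem_Icc] at hs ⊢
      obtain ⟨⟨hs1, hs2⟩, hs3⟩ := hs
      refine ⟨hs1, ?_⟩
      by_contra hc
      exact hs3 (Nat.le_zero.mp (hz ▸ mono r s h1' (by omega)))
    have hcard := Finset.card_le_card hsub
    have hhc : ((Finset.Icc 1 n).filter fun s => f s ≠ 0).card = h := rfl
    rw [hhc, Nat.card_Icc] at hcard
    omega
  have L1b : ∀ r, h < r → f r = 0 := by
    intro r hr
    by_cases hrn : r ≤ n
    · by_contra hz
      have hr1 : 1 ≤ r := by omega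
      have hsub : Finset.Icc 1 r ⊆ (Finset.Icc 1 n).filter fun s => f s ≠ 0 := by
        intro s hs
        simp only [Finset.mem_filter, Finset.mem_Icc] at hs ⊢
        refine ⟨⟨hs.1, le_trans hs.2 hrn⟩, fun h0 => hz ?_⟩
        exact Nat.le_zero.mp (h0 ▸ mono s r hs.1 hs.2)
      have hcard := Finset.card_le_card hsub
      have hhc : ((Finset.Icc 1 n).filter fun s => f s ≠ 0).card = h := rfl
      rw [hhc, Nat.card_Icc] at hcard
      omega
    · exact hf.2.2 r (by omega)
  have L2 : ∀ r, 1 ≤ r → r + 1 ≤ h → f (r+1) < f r := by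
    intro r h1' h2'
    have hne : f (r+1) ≠ 0 := L1a _ (by omega) h2'
    have h3' := hreg r h1'
    norm_num at h3'
    exact lt_of_le_of_ne (hf.1 r h1') (Ne.symm (h3' hne))
  have RemIff : ∀ s, Rem f s ↔ (1 ≤ s ∧ s ≤ h) := by
    intro s
    constructor
    · rintro ⟨hs1, hs2⟩
      refine ⟨hs1, ?_⟩
      by_contra hc
      have := L1b s (by omega)
      omega
    · rintro ⟨hs1, hs2⟩
      refine ⟨hs1, ?_⟩
      rcases eq_or_lt_of_le hs2 with he | hl
      · have h0 := L1b (s+1) (by omega)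
        have h1' := L1a s hs1 hs2
        omega
      · exact L2 s hs1 (by omega)
  have AddIff : ∀ s, Addb f s ↔ (1 ≤ s ∧ s ≤ h + 1) := by
    intro s
    constructor
    · rintro ⟨hs1, hs2⟩
      refine ⟨hs1, ?_⟩
      by_contra hc
      push_neg at hc
      rcases hs2 with rfl | hlt
      · omega
      · have h0 := L1b s (by omega)
        have h1' := L1b (s-1) (by omega)
        omega
    · rintro ⟨hs1, hs2⟩
      refine ⟨hs1, ?_⟩
      rcases eq_or_lt_of_le hs1 with he | hl
      · exact Or.inl he.symm
      · right
        rcases (by omega : s ≤ h ∨ s = h + 1) with hsh | rfl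
        · have := L2 (s-1) (by omega) (by omega : (s-1)+1 ≤ h)
          rwa [(by omega : s - 1 + 1 = s)] at this
        · have h0 := L1b (h+1) (by omega)
          have h1' := L1a h (by omega) (le_refl _)
          simp only [Nat.add_sub_cancel]
          omega
  -- filter conversions on windows inside [1, h]
  have convRem : ∀ (j : ZMod 2) (a b : ℕ), 1 ≤ a → b ≤ h + 1 →
      ((Finset.Ico a b).filter fun s => Rem f s ∧ resRem 2 f s = j)
        = ((Finset.Ico a b).filter fun s => resRem 2 f s = j) := by
    intro j a b ha hb
    apply Finset.filter_congr
    intro s hs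
    simp only [Finset.mem_Ico] at hs
    have : Rem f s := (RemIff s).2 ⟨by omega, by omega⟩
    simp [this]
  have convAdd : ∀ (j : ZMod 2) (a b : ℕ), 1 ≤ a → b ≤ h + 1 →
      ((Finset.Ico a b).filter fun s => Addb f s ∧ resAdd 2 f s = j)
        = ((Finset.Ico a b).filter fun s => resRem 2 f s + 1 = j) := by
    intro j a b ha hb
    apply Finset.filter_congr
    intro s hs
    simp only [Finset.mem_Ico] at hs
    have : Addb f s := (AddIff s).2 ⟨by omega, by omega⟩
    simp [this, resAdd_eq]
  have keyPw : ∀ a b : ℕ, 1 ≤ a → a ≤ b →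
      (((Finset.Ico a b).filter fun s => resRem 2 f s = i).card : ℤ)
        - (((Finset.Ico a b).filter fun s => ¬(resRem 2 f s = i)).card : ℤ)
        = Pw f i (b-1) - Pw f i (a-1) := by
    intro a b ha hab
    rw [← Pw_window f i a b ha hab, sum_pm]
  -- unpacked hypotheses
  have hno2 : ∀ r, ¬ NormalN 2 f (1-i) r := by
    intro r hr
    have hrem := (RemIff r).1 hr.1
    have hmem : r ∈ (Finset.Icc 1 n).filter fun r => NormalN 2 f (1-i) r := by
      simp only [Finset.mem_filter, Finset.mem_Icc]
      exact ⟨⟨hrem.1, le_trans hrem.2 hSle⟩, hr⟩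
    have h2' : ((Finset.Icc 1 n).filter fun r => NormalN 2 f (1-i) r) = ∅ :=
      Finset.card_eq_zero.mp h2
    rw [h2'] at hmem
    exact absurd hmem (Finset.notMem_empty r)
  have hno3 : ∀ r, ¬ ConormalN 2 f i r := by
    intro r hr
    have hadd := (AddIff r).1 hr.1
    have hmem : r ∈ (Finset.Icc 1 (n+1)).filter fun r => ConormalN 2 f i r := by
      simp only [Finset.mem_filter, Finset.mem_Icc]
      exact ⟨⟨hadd.1, by omega⟩, hr⟩
    have h3' : ((Finset.Icc 1 (n+1)).filter fun r => ConormalN 2 f i r) = ∅ :=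
      Finset.card_eq_zero.mp h3
    rw [h3'] at hmem
    exact absurd hmem (Finset.notMem_empty r)
  -- Step A : the walk stays nonnegative
  have stepA : ∀ k, k ≤ h → 0 ≤ Pw f i k := by
    intro k
    induction k using Nat.strong_induction_on with
    | _ k IH =>
      intro hk
      match k with
      | 0 => rw [Pw_zero]
      | (m+1) =>
        have hm : 0 ≤ Pw f i m := IH m (by omega) (by omega)
        rw [Pw_succ]
        by_cases hres : resRem 2 f (m+1) = i
        · rw [if_pos hres]; linarith
        · rw [if_neg hres]
          by_contra hc
          push_neg at hc
          have hPm0 : Pw f i m ≤ 0 := by linarith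
          apply hno2 (m+1)
          refine ⟨(RemIff (m+1)).2 ⟨by omega, hk⟩, (z_sub _ i).2 hres, ?_⟩
          intro r' hr'1 hr'2
          rw [convAdd (1-i) r' (m+1) hr'1 (by omega), convRem (1-i) r' (m+1) hr'1 (by omega)]
          rw [Finset.filter_congr (fun s _ => z_add' (resRem 2 f s) i)]
          rw [Finset.filter_congr (fun s _ => z_sub (resRem 2 f s) i)]
          have hkey := keyPw r' (m+1) hr'1 (by omega)
          have hr'm : 0 ≤ Pw f i (r'-1) := IH (r'-1) (by omega) (by omega)
          have : (((Finset.Ico r' (m+1)).filter fun s => resRem 2 f s = i).card : ℤ)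
              ≤ (((Finset.Ico r' (m+1)).filter fun s => ¬(resRem 2 f s = i)).card : ℤ) := by
            simp only [Nat.add_sub_cancel] at hkey
            linarith
          exact_mod_cast this
  -- Step B : no addable i-node in row h+1
  have hBne : ¬ ((h : ZMod 2) = i) := by
    intro hhi
    apply hno3 (h+1)
    refine ⟨(AddIff _).2 ⟨by omega, le_refl _⟩, ?_, ?_⟩
    · show (f (h+1) : ZMod 2) + 1 - ((h+1 : ℕ) : ZMod 2) = i
      rw [L1b (h+1) (by omega)]
      push_cast
      rw [z_neg]
      exact hhi
    · intro r' hr'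
      have hempty : (Finset.Ioc (h+1) r').filter (fun s => Rem f s ∧ resRem 2 f s = i) = ∅ := by
        apply Finset.filter_false_of_mem
        intro s hs
        simp only [Finset.mem_Ioc] at hs
        rintro ⟨hrem, -⟩
        exact absurd ((RemIff s).1 hrem).2 (by omega)
      rw [hempty]
      simp
  -- Step C : Pw f i h is the maximum of the walk
  have stepC : ∀ d k, h = k + d → ∀ j, k ≤ j → j ≤ h → Pw f i j ≤ Pw f i h := by
    intro d
    induction d with
    | zero =>
      intro k hk j hj1 hj2
      rw [(by omega : j = h)]
    | succ d IH =>
      intro k hk j hj1 hj2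
      rcases eq_or_lt_of_le hj1 with he | hlt
      · rw [he] at hk
        have hk1 : Pw f i (j+1) ≤ Pw f i h := IH (j+1) (by omega) (j+1) (le_refl _) (by omega)
        by_cases hres : resRem 2 f (j+1) = i
        · have hstep : Pw f i (j+1) = Pw f i j + 1 := by rw [Pw_succ, if_pos hres]
          linarith
        · have hstep : Pw f i (j+1) = Pw f i j + (-1) := by rw [Pw_succ, if_neg hres]
          by_contra hc
          push_neg at hc
          apply hno3 (j+1)
          refine ⟨(AddIff (j+1)).2 ⟨by omega, by omega⟩, ?_, ?_⟩
          · rw [resAdd_eq]; exact (z_add _ i).2 hres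
          · intro r' hr'
            have hmk : j + 1 ≤ min r' h := by omega
            have eL : (Finset.Ioc (j+1) r').filter (fun s => Rem f s ∧ resRem 2 f s = i)
                = (Finset.Ico (j+2) (min r' h + 1)).filter (fun s => resRem 2 f s = i) := by
              ext s
              simp only [Finset.mem_filter, Finset.mem_Ioc, Finset.mem_Ico]
              constructor
              · rintro ⟨⟨hs1, hs2⟩, hrem, hres'⟩
                have := (RemIff s).1 hrem
                exact ⟨⟨by omega, by omega⟩, hres'⟩
              · rintro ⟨⟨hs1, hs2⟩, hres'⟩
                exact ⟨⟨by omega, by omega⟩, (RemIff s).2 ⟨by omega, by omega⟩, hres'⟩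
            have eR : (Finset.Ico (j+2) (min r' h + 1)).filter (fun s => ¬(resRem 2 f s = i))
                ⊆ (Finset.Ioc (j+1) r').filter (fun s => Addb f s ∧ resAdd 2 f s = i) := by
              intro s hs
              simp only [Finset.mem_filter, Finset.mem_Ioc, Finset.mem_Ico] at hs ⊢
              obtain ⟨⟨hs1, hs2⟩, hres'⟩ := hs
              refine ⟨⟨by omega, by omega⟩, (AddIff s).2 ⟨by omega, by omega⟩, ?_⟩
              rw [resAdd_eq]
              exact (z_add _ i).2 hres'
            rw [eL]
            refine le_trans ?_ (Finset.card_le_card eR)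
            have hkey := keyPw (j+2) (min r' h + 1) (by omega) (by omega)
            rw [(by omega : j + 2 - 1 = j + 1)] at hkey
            simp only [Nat.add_sub_cancel] at hkey
            have hPm : Pw f i (min r' h) ≤ Pw f i (j+1) := by
              rcases eq_or_lt_of_le hmk with he2 | hlt2
              · rw [← he2]
              · have := IH (j+1) (by omega) (min r' h) (by omega) (by omega)
                linarith
            have : (((Finset.Ico (j+2) (min r' h + 1)).filter fun s => resRem 2 f s = i).card : ℤ)
                ≤ (((Finset.Ico (j+2) (min r' h + 1)).filter fun s => ¬(resRem 2 f s = i)).card : ℤ) := by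
              linarith
            exact_mod_cast this
      · exact IH (k+1) (by omega) j (by omega) hj2
  -- record property of normal rows
  have hrec : ∀ r, NormalN 2 f i r → ∀ j, j < r → Pw f i j ≤ Pw f i (r-1) := by
    intro r hr j hj
    have hrem := (RemIff r).1 hr.1
    rcases (by omega : j = r - 1 ∨ j + 1 < r) with he | hlt
    · rw [he]
    · have hw := hr.2.2 (j+1) (by omega) (by omega)
      rw [convAdd i (j+1) r (by omega) (by omega), convRem i (j+1) r (by omega) (by omega)] at hw
      rw [Finset.filter_congr (fun s _ => z_add (resRem 2 f s) i)] at hw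
      have hkey := keyPw (j+1) r (by omega) (by omega)
      simp only [Nat.add_sub_cancel] at hkey
      have hw' : (((Finset.Ico (j+1) r).filter fun s => ¬(resRem 2 f s = i)).card : ℤ)
          ≤ (((Finset.Ico (j+1) r).filter fun s => resRem 2 f s = i).card : ℤ) := by exact_mod_cast hw
      linarith
  have hvalN : ∀ r, NormalN 2 f i r → Pw f i r = Pw f i (r-1) + 1 ∧ 1 ≤ Pw f i r := by
    intro r hr
    have hrem := (RemIff r).1 hr.1
    have e : r - 1 + 1 = r := by omega
    have hs : Pw f i r = Pw f i (r-1) + 1 := by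
      conv_lhs => rw [← e]
      rw [Pw_succ]
      rw [e, if_pos hr.2.1]
    have h0 : Pw f i 0 ≤ Pw f i (r-1) := hrec r hr 0 (by omega)
    rw [Pw_zero] at h0
    exact ⟨hs, by linarith⟩
  -- the "first hitting time" map
  set g : ℕ → ℕ := fun m => if hm : ∃ k, (m:ℤ) ≤ Pw f i k then Nat.find hm else 0 with hg
  have hM0 : 0 ≤ Pw f i h := stepA h (le_refl _)
  have gprop : ∀ m : ℕ, 1 ≤ m → (m:ℤ) ≤ Pw f i h →
      NormalN 2 f i (g m) ∧ Pw f i (g m) = m ∧ 1 ≤ g m ∧ g m ≤ h := by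
    intro m hm1 hmM
    have hex : ∃ k, (m:ℤ) ≤ Pw f i k := ⟨h, hmM⟩
    have hgm : g m = Nat.find hex := by rw [hg]; simp only [dif_pos hex]
    set r := Nat.find hex with hr
    have hspec : (m:ℤ) ≤ Pw f i r := Nat.find_spec hex
    have hmin : ∀ j, j < r → ¬((m:ℤ) ≤ Pw f i j) := fun j hj => Nat.find_min hex hj
    have hr1 : 1 ≤ r := by
      by_contra hc
      have : r = 0 := by omega
      rw [this, Pw_zero] at hspec
      omega
    have hrh : r ≤ h := Nat.find_min' hex hmM
    have hprev : Pw f i (r-1) < m := by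
      have := hmin (r-1) (by omega)
      omega
    have e : r - 1 + 1 = r := by omega
    have hres : resRem 2 f r = i := by
      by_contra hc
      have : Pw f i r = Pw f i (r-1) + (-1) := by
        conv_lhs => rw [← e]
        rw [Pw_succ, e, if_neg hc]
      omega
    have hstep : Pw f i r = Pw f i (r-1) + 1 := by
      conv_lhs => rw [← e]
      rw [Pw_succ, e, if_pos hres]
    have hPr : Pw f i r = m := by omega
    have hnorm : NormalN 2 f i r := by
      refine ⟨(RemIff r).2 ⟨hr1, hrh⟩, hres, ?_⟩
      intro r' hr'1 hr'2
      rw [convAdd i r' r hr'1 (by omega), convRem i r' r hr'1 (by omega)]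
      rw [Finset.filter_congr (fun s _ => z_add (resRem 2 f s) i)]
      have hkey := keyPw r' r hr'1 (by omega)
      have hP' : Pw f i (r'-1) < m := by
        have := hmin (r'-1) (by omega)
        omega
      have : (((Finset.Ico r' r).filter fun s => ¬(resRem 2 f s = i)).card : ℤ)
          ≤ (((Finset.Ico r' r).filter fun s => resRem 2 f s = i).card : ℤ) := by
        linarith
      exact_mod_cast this
    rw [hgm]
    exact ⟨hnorm, hPr, hr1, hrh⟩
  -- card N = (Pw f i h).toNat
  set N := (Finset.Icc 1 n).filter (fun r => NormalN 2 f i r) with hN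
  have hNcard : N.card = 2 := h1
  set M := Pw f i h with hM
  have card1 : N.card ≤ (Finset.Icc 1 M.toNat).card := by
    apply Finset.card_le_card_of_injOn (fun r => (Pw f i r).toNat)
    · intro r hrN
      rw [hN] at hrN
      simp only [Finset.mem_coe, Finset.mem_filter, Finset.mem_Icc] at hrN
      obtain ⟨-, hnorm⟩ := hrN
      have hv := hvalN r hnorm
      have hrh := (RemIff r).1 hnorm.1
      have hle : Pw f i r ≤ M := stepC h 0 (by omega) r (by omega) hrh.2
      simp only [Finset.mem_coe, Finset.mem_Icc]
      omega
    · intro r hrN r' hr'N heq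
      rw [hN] at hrN hr'N
      simp only [Finset.coe_filter, Set.mem_setOf_eq, Finset.mem_Icc] at hrN hr'N
      obtain ⟨-, hn1⟩ := hrN
      obtain ⟨-, hn2⟩ := hr'N
      by_contra hne
      have hv1 := hvalN r hn1
      have hv2 := hvalN r' hn2
      rcases (by omega : r < r' ∨ r' < r) with hlt | hlt
      · have := hrec r' hn2 r hlt
        have : Pw f i r < Pw f i r' := by omega
        simp only at heq
        omega
      · have := hrec r hn1 r' hlt
        have : Pw f i r' < Pw f i r := by omega
        simp only at heq
        omega
    
  have card2 : (Finset.Icc 1 M.toNat).card ≤ N.card := by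
    apply Finset.card_le_card_of_injOn g
    · intro m hm
      simp only [Finset.mem_coe, Finset.mem_Icc] at hm
      have := gprop m hm.1 (by omega)
      rw [hN]
      simp only [Finset.mem_coe, Finset.mem_filter, Finset.mem_Icc]
      exact ⟨⟨this.2.2.1, le_trans this.2.2.2 hSle⟩, this.1⟩
    · intro m hm m' hm' heq
      simp only [Finset.coe_Icc, Set.mem_Icc] at hm hm'
      have e1 := (gprop m hm.1 (by omega)).2.1
      have e2 := (gprop m' hm'.1 (by omega)).2.1
      rw [heq] at e1
      omega
  have hMcard : M.toNat = 2 := by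
    have := Nat.card_Icc 1 M.toNat
    omega
  have hM2 : M = 2 := by omega
  -- counting identities
  set RR := ((Finset.Icc 1 h).filter fun s => resRem 2 f s = i).card with hRR
  set CC := ((Finset.Icc 1 h).filter fun s => ¬(resRem 2 f s = i)).card with hCC
  have hsplit : RR + CC = h := by
    rw [hRR, hCC, Finset.card_filter_add_card_filter_not]
    simp [Nat.card_Icc]
  have hPh : (RR : ℤ) - (CC : ℤ) = M := by
    rw [hM]
    unfold Pw
    rw [(by rw [Finset.Ico_add_one_right_eq_Icc] : Finset.Ico 1 (h+1) = Finset.Icc 1 h), sum_pm]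
  have h2RR : 2 * RR = h + 2 := by omega
  have hieq : i = 1 := by
    apply z_one
    intro hi0
    apply hBne
    rw [hi0, (by omega : h = 2 * (RR - 1))]
    push_cast
    rw [show ((2:ZMod 2)) = 0 by decide]
    ring
  -- final parity computation
  have hcast : ((n : ℕ) : ZMod 2) = 1 := by
    have hn : ((n : ℕ) : ZMod 2) = ∑ r ∈ Finset.Icc 1 n, ((f r : ℕ) : ZMod 2) := by
      rw [← Nat.cast_sum, hf.2.1]
    rw [hn]
    have hrestrict : ∑ r ∈ Finset.Icc 1 n, ((f r : ℕ) : ZMod 2)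
        = ∑ r ∈ Finset.Icc 1 h, ((f r : ℕ) : ZMod 2) := by
      rw [Finset.sum_subset (Finset.Icc_subset_Icc_right hSle)]
      intro x hx hnx
      simp only [Finset.mem_Icc] at hx hnx
      rw [L1b x (by omega)]
      simp
    rw [hrestrict]
    have hterm : ∀ r, ((f r : ℕ) : ZMod 2) = resRem 2 f r + (r : ZMod 2) := by
      intro r
      unfold resRem
      ring
    rw [Finset.sum_congr rfl (fun r _ => hterm r), Finset.sum_add_distrib]
    have hres_sum : ∑ r ∈ Finset.Icc 1 h, resRem 2 f r = (RR : ZMod 2) * i + (CC : ZMod 2) * (i + 1) := by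
      rw [← Finset.sum_filter_add_sum_filter_not (Finset.Icc 1 h) (fun s => resRem 2 f s = i)]
      congr 1
      · rw [Finset.sum_congr rfl (fun s hs => (Finset.mem_filter.mp hs).2), Finset.sum_const,
          nsmul_eq_mul]
      · rw [Finset.sum_congr rfl (fun s hs => (z_ne _ i).mp (Finset.mem_filter.mp hs).2),
          Finset.sum_const, nsmul_eq_mul]
    have hr_sum : ∑ r ∈ Finset.Icc 1 h, ((r : ℕ) : ZMod 2) = ((RR - 1 : ℕ) : ZMod 2) := by
      rw [← Nat.cast_sum, (by omega : h = 2 * (RR - 1)), gauss_even]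
      push_cast [(by omega : (2 * (RR - 1) : ℕ) = 2 * (RR - 1))]
      ring_nf
      rw [show ((2:ZMod 2)) = 0 by decide]
      ring
    rw [hres_sum, hr_sum, hieq]
    rw [show ((1:ZMod 2) + 1) = 0 by decide]
    have hRR1 : (1:ℕ) ≤ RR := by omega
    have : ((RR - 1 : ℕ) : ZMod 2) = (RR : ZMod 2) - 1 := by
      push_cast [hRR1]
      ring
    rw [this]
    have e2 : (RR:ZMod 2) * 1 + (CC:ZMod 2) * 0 + ((RR:ZMod 2) - 1) = 2 * (RR:ZMod 2) - 1 := by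
      ring
    rw [e2, show ((2:ZMod 2)) = 0 by decide, zero_mul, zero_sub]
    decide
  have hval := congrArg ZMod.val hcast
  rw [ZMod.val_natCast] at hval
  rw [Nat.odd_iff]
  simpa using hval.trans (by decide : ZMod.val (1 : ZMod 2) = 1)
end
end

section
/- Let p = 2 and λ a 2-regular partition of n with ε_0(λ) = ε_1(λ) = 1. Let i be the residue of the lower of the two normal nodes of λ. If φ_i(λ) = 3, then n is odd. -/
/-!
STATEMENT 13: Let `p = 2` and `λ` a `2`-regular partition of `n` with `ε₀(λ) = ε₁(λ) = 1`.
Let `i` be the residue of the lower of the two normal nodes of `λ` (the normal node in the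
largest row `r`).  If `φ_i(λ) = 3`, then `n` is odd.
-/

noncomputable section

open scoped Classical

namespace S13

def Pre (g : ℕ → ℤ) (r : ℕ) : ℤ := ∑ s ∈ Finset.Icc 1 r, g s

lemma Pre_def (g : ℕ → ℤ) (r : ℕ) : Pre g r = ∑ s ∈ Finset.Icc 1 r, g s := rfl

lemma Pre_succ (g : ℕ → ℤ) (r : ℕ) : Pre g (r + 1) = Pre g r + g (r + 1) := by
  rw [Pre, Pre, Finset.sum_Icc_succ_top (by omega)]

lemma Pre_sub (g : ℕ → ℤ) {j r : ℕ} (h : j ≤ r) :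
    Pre g r - Pre g j = ∑ s ∈ Finset.Ioc j r, g s := by
  have h0 : ∀ m : ℕ, Pre g m = ∑ s ∈ Finset.Ioc 0 m, g s := by
    intro m; rw [Pre, ← Finset.Icc_add_one_left_eq_Ioc]; rfl
  have := Finset.sum_Ioc_consecutive g (Nat.zero_le j) h
  rw [h0, h0]; linarith

/-- minimum of `P` over `[0, n]` -/
def MinUp (P : ℕ → ℤ) : ℕ → ℤ
  | 0 => P 0
  | n + 1 => min (MinUp P n) (P (n + 1))

lemma minUp_le (P : ℕ → ℤ) : ∀ n j, j ≤ n → MinUp P n ≤ P j := by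
  intro n
  induction n with
  | zero => intro j hj; interval_cases j; simp [MinUp]
  | succ n ih =>
      intro j hj
      rcases Nat.lt_or_ge j (n+1) with h | h
      · exact le_trans (min_le_left _ _) (ih j (by omega))
      · have : j = n + 1 := by omega
        subst this; exact min_le_right _ _

lemma minUp_attained (P : ℕ → ℤ) : ∀ n, ∃ j, j ≤ n ∧ MinUp P n = P j := by
  intro n
  induction n with
  | zero => exact ⟨0, le_rfl, rfl⟩
  | succ n ih =>
      obtain ⟨j, hj, hje⟩ := ih
      rcases le_or_gt (MinUp P n) (P (n+1)) with h | h
      · exact ⟨j, by omega, by rw [MinUp]; omega⟩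
      · exact ⟨n+1, le_rfl, by rw [MinUp]; omega⟩

/-- minimum of `P` over `[N - d, N]` -/
def MinFrom (P : ℕ → ℤ) (N : ℕ) : ℕ → ℤ
  | 0 => P N
  | d + 1 => min (P (N - (d + 1))) (MinFrom P N d)

lemma minFrom_le (P : ℕ → ℤ) (N : ℕ) : ∀ d j, N - d ≤ j → j ≤ N → MinFrom P N d ≤ P j := by
  intro d
  induction d with
  | zero => intro j h1 h2; have : j = N := by omega
            subst this; simp [MinFrom]
  | succ d ih =>
      intro j h1 h2
      rcases Nat.lt_or_ge (N - d - 1) j with h | h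
      · exact le_trans (min_le_right _ _) (ih j (by omega) h2)
      · have : j = N - (d + 1) := by omega
        subst this; exact min_le_left _ _

lemma minFrom_ge (P : ℕ → ℤ) (N : ℕ) (x : ℤ) :
    ∀ d, (∀ j, N - d ≤ j → j ≤ N → x ≤ P j) → x ≤ MinFrom P N d := by
  intro d
  induction d with
  | zero => intro h; exact h N (by omega) le_rfl
  | succ d ih =>
      intro h
      rw [MinFrom]
      exact le_min (h (N - (d+1)) le_rfl (by omega)) (ih fun j h1 h2 => h j (by omega) h2)

lemma minFrom_attained (P : ℕ → ℤ) (N : ℕ) :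
    ∀ d, ∃ j, N - d ≤ j ∧ j ≤ N ∧ MinFrom P N d = P j := by
  intro d
  induction d with
  | zero => exact ⟨N, by omega, le_rfl, rfl⟩
  | succ d ih =>
      obtain ⟨j, hj1, hj2, hje⟩ := ih
      rcases le_or_gt (P (N - (d+1))) (MinFrom P N d) with h | h
      · exact ⟨N - (d+1), le_rfl, by omega, by rw [MinFrom]; omega⟩
      · exact ⟨j, by omega, hj2, by rw [MinFrom]; omega⟩

lemma minFrom_eq_minUp (P : ℕ → ℤ) (N : ℕ) : MinFrom P N N = MinUp P N := by
  apply le_antisymm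
  · obtain ⟨j, hj, hje⟩ := minUp_attained P N
    rw [hje]
    exact minFrom_le P N N j (by omega) hj
  · obtain ⟨j, hj1, hj2, hje⟩ := minFrom_attained P N N
    rw [hje]
    exact minUp_le P N j hj2

lemma countNormal (g : ℕ → ℤ) (hg : ∀ s, -1 ≤ g s) (N : ℕ) :
    (((Finset.Icc 1 N).filter fun r => g r = -1 ∧ ∀ j, j < r → Pre g r < Pre g j).card : ℤ)
      = - MinUp (Pre g) N := by
  induction N with
  | zero => simp [MinUp, Pre]
  | succ N ih =>
      have hins1 : Finset.Icc 1 (N + 1) = insert (N + 1) (Finset.Icc 1 N) := by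
        ext x; simp [Finset.mem_Icc]; omega
      set m := MinUp (Pre g) N with hm
      have hPNm : m ≤ Pre g N := minUp_le _ _ _ le_rfl
      have hstep : MinUp (Pre g) (N+1) = min m (Pre g (N+1)) := rfl
      have hPsucc : Pre g (N+1) = Pre g N + g (N+1) := Pre_succ g N
      by_cases hcond : g (N+1) = -1 ∧ ∀ j, j < N + 1 → Pre g (N+1) < Pre g j
      · obtain ⟨j₀, hj₀, hj₀e⟩ := minUp_attained (Pre g) N
        have h1 : Pre g (N+1) < m := by
          rw [hm, hj₀e]; exact hcond.2 j₀ (by omega)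
        have h3 : Pre g (N+1) = m - 1 := by
          have := hg (N+1); omega
        rw [hins1, Finset.filter_insert, if_pos hcond,
          Finset.card_insert_of_notMem (by simp [Finset.mem_Icc])]
        push_cast
        rw [ih, hstep]
        omega
      · have hge : m ≤ Pre g (N+1) := by
          by_cases hneg : g (N+1) = -1
          · push_neg at hcond
            obtain ⟨j, hj, hjle⟩ := hcond hneg
            calc m ≤ Pre g j := minUp_le _ _ _ (by omega)
            _ ≤ Pre g (N+1) := hjle
          · have := hg (N+1); omega
        rw [hins1, Finset.filter_insert, if_neg hcond, ih, hstep]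
        omega

lemma countConormal (g : ℕ → ℤ) (hg : ∀ s, g s ≤ 1) (N : ℕ) :
    ∀ d, d ≤ N →
    (((Finset.Ioc (N - d) N).filter fun r =>
        g r = 1 ∧ ∀ j, r ≤ j → j ≤ N → Pre g r ≤ Pre g j).card : ℤ)
      = Pre g N - MinFrom (Pre g) N d := by
  intro d
  induction d with
  | zero => intro _; simp [MinFrom]
  | succ d ih =>
      intro hdN
      have ih' := ih (by omega)
      set t := N - (d + 1) with ht
      have htd : N - d = t + 1 := by omega
      have htN : t + 1 ≤ N := by omega
      rw [htd] at ih'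
      have hins1 : Finset.Ioc t N = insert (t+1) (Finset.Ioc (t+1) N) := by
        ext x; simp [Finset.mem_Ioc]; omega
      set m := MinFrom (Pre g) N d with hm
      have hstep : MinFrom (Pre g) N (d+1) = min (Pre g t) m := by
        rw [MinFrom, ← ht]
      have hmle : ∀ j, t + 1 ≤ j → j ≤ N → m ≤ Pre g j := by
        intro j h1 h2; exact minFrom_le _ _ _ _ (by omega) h2
      have hPsucc : Pre g (t+1) = Pre g t + g (t+1) := Pre_succ g t
      by_cases hcond : g (t+1) = 1 ∧ ∀ j, t + 1 ≤ j → j ≤ N → Pre g (t+1) ≤ Pre g j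
      · have h1 : Pre g (t+1) ≤ m := by
          rw [hm]; exact minFrom_ge _ _ _ _ (fun j hj1 hj2 => hcond.2 j (by omega) hj2)
        have h2 : m ≤ Pre g (t+1) := hmle (t+1) le_rfl htN
        rw [hins1, Finset.filter_insert, if_pos hcond,
          Finset.card_insert_of_notMem (by simp)]
        push_cast
        rw [ih', hstep]
        omega
      · have hge : m ≤ Pre g t := by
          by_cases hpos : g (t+1) = 1
          · push_neg at hcond
            obtain ⟨j, hj1, hj2, hjlt⟩ := hcond hpos
            have := hmle j hj1 hj2
            omega
          · have h4 := hg (t+1)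
            have := hmle (t+1) le_rfl htN
            omega
        rw [hins1, Finset.filter_insert, if_neg hcond, ih', hstep]
        omega

lemma master (g : ℕ → ℤ) (hg : ∀ s, -1 ≤ g s ∧ g s ≤ 1) (N : ℕ) :
    (((Finset.Icc 1 N).filter fun r => g r = 1 ∧ ∀ j, r ≤ j → j ≤ N → Pre g r ≤ Pre g j).card : ℤ)
    - (((Finset.Icc 1 N).filter fun r => g r = -1 ∧ ∀ j, j < r → Pre g r < Pre g j).card : ℤ)
    = Pre g N := by
  have hA := countNormal g (fun s => (hg s).1) N
  have hB := countConormal g (fun s => (hg s).2) N N le_rfl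
  rw [Nat.sub_self] at hB
  have hIoc : Finset.Ioc 0 N = Finset.Icc 1 N := (Finset.Icc_add_one_left_eq_Ioc 0 N).symm
  rw [hIoc, minFrom_eq_minUp] at hB
  rw [hA, hB]
  ring

def gfun (f : ℕ → ℕ) (i : ZMod 2) (s : ℕ) : ℤ :=
  (if Addb f s ∧ resAdd 2 f s = i then 1 else 0)
    - (if Rem f s ∧ resRem 2 f s = i then 1 else 0)

lemma resAdd_eq (f : ℕ → ℕ) (s : ℕ) : resAdd 2 f s = resRem 2 f s + 1 := by
  unfold resAdd resRem; ring

lemma zmod2_succ_ne (a : ZMod 2) : a + 1 ≠ a := by revert a; decide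

lemma zmod2_of_ne {a b : ZMod 2} (h : a ≠ b) : a = b + 1 := by revert h; revert a b; decide

lemma g_bound (f : ℕ → ℕ) (i : ZMod 2) (s : ℕ) : -1 ≤ gfun f i s ∧ gfun f i s ≤ 1 := by
  unfold gfun; split_ifs <;> norm_num

lemma g_eq_neg1 (f : ℕ → ℕ) (i : ZMod 2) (s : ℕ) :
    gfun f i s = -1 ↔ (Rem f s ∧ resRem 2 f s = i) := by
  by_cases h2 : Rem f s ∧ resRem 2 f s = i
  · have h1 : ¬(Addb f s ∧ resAdd 2 f s = i) := by
      rintro ⟨_, ha⟩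
      rw [resAdd_eq, h2.2] at ha
      exact zmod2_succ_ne i ha
    simp [gfun, h1, h2]
  · simp only [gfun, if_neg h2]
    split_ifs <;> simp [h2]

lemma g_eq_1 (f : ℕ → ℕ) (i : ZMod 2) (s : ℕ) :
    gfun f i s = 1 ↔ (Addb f s ∧ resAdd 2 f s = i) := by
  by_cases h1 : Addb f s ∧ resAdd 2 f s = i
  · have h2 : ¬(Rem f s ∧ resRem 2 f s = i) := by
      rintro ⟨_, ha⟩
      rw [resAdd_eq, ha] at h1
      exact zmod2_succ_ne i h1.2
    simp [gfun, h1, h2]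
  · simp only [gfun, if_neg h1]
    split_ifs <;> simp [h1]

lemma sum_g (f : ℕ → ℕ) (i : ZMod 2) (T : Finset ℕ) :
    ∑ s ∈ T, gfun f i s =
      ((T.filter fun s => Addb f s ∧ resAdd 2 f s = i).card : ℤ)
        - ((T.filter fun s => Rem f s ∧ resRem 2 f s = i).card : ℤ) := by
  unfold gfun
  rw [Finset.sum_sub_distrib, Finset.sum_boole, Finset.sum_boole]

lemma normal_iff (f : ℕ → ℕ) (i : ZMod 2) (r : ℕ) :
    NormalN 2 f i r ↔
      (gfun f i r = -1 ∧ ∀ j, j < r → Pre (gfun f i) r < Pre (gfun f i) j) := by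
  set g := gfun f i with hg
  have key : ∀ j, j < r → (Pre g r - Pre g j = (∑ s ∈ Finset.Ico (j+1) r, g s) + g r) := by
    intro j hj
    rw [Pre_sub g (le_of_lt hj)]
    have he : Finset.Ioc j r = insert r (Finset.Ico (j+1) r) := by
      ext x; simp [Finset.mem_Ioc, Finset.mem_Ico, Finset.mem_insert]; omega
    rw [he, Finset.sum_insert (by simp)]
    ring
  constructor
  · rintro ⟨h1, h2, h3⟩
    have hgr : g r = -1 := (g_eq_neg1 f i r).mpr ⟨h1, h2⟩
    refine ⟨hgr, fun j hj => ?_⟩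
    have hsum : (∑ s ∈ Finset.Ico (j+1) r, g s) ≤ 0 := by
      rcases eq_or_lt_of_le (show j + 1 ≤ r by omega) with h | h
      · rw [h]; simp
      · rw [sum_g]
        have := h3 (j+1) (by omega) (by omega)
        push_cast
        omega
    have := key j hj
    omega
  · rintro ⟨hg1, h2⟩
    obtain ⟨ha, hb⟩ := (g_eq_neg1 f i r).mp hg1
    refine ⟨ha, hb, fun r' h1r hr'r => ?_⟩
    have hj := h2 (r' - 1) (by omega)
    have hk := key (r' - 1) (by omega)
    rw [show r' - 1 + 1 = r' by omega] at hk
    have hsum : (∑ s ∈ Finset.Ico r' r, g s) ≤ 0 := by omega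
    rw [sum_g] at hsum
    omega

lemma conormal_iff (f : ℕ → ℕ) (i : ZMod 2) (N r : ℕ) (hrN : r ≤ N)
    (hz : ∀ s, N < s → gfun f i s = 0) :
    ConormalN 2 f i r ↔
      (gfun f i r = 1 ∧ ∀ j, r ≤ j → j ≤ N → Pre (gfun f i) r ≤ Pre (gfun f i) j) := by
  set g := gfun f i with hg
  constructor
  · rintro ⟨h1, h2, h3⟩
    refine ⟨(g_eq_1 f i r).mpr ⟨h1, h2⟩, fun j hj1 hj2 => ?_⟩
    rcases eq_or_lt_of_le hj1 with h | h
    · rw [h]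
    · have hsum : (0:ℤ) ≤ ∑ s ∈ Finset.Ioc r j, g s := by
        rw [sum_g]
        have := h3 j h
        push_cast
        omega
      have := Pre_sub g (le_of_lt h)
      omega
  · rintro ⟨hg1, h2⟩
    obtain ⟨ha, hb⟩ := (g_eq_1 f i r).mp hg1
    refine ⟨ha, hb, fun r' hr' => ?_⟩
    have hsum : (0:ℤ) ≤ ∑ s ∈ Finset.Ioc r r', g s := by
      rcases le_or_gt r' N with h | h
      · have := h2 r' (le_of_lt hr') h
        have := Pre_sub g (le_of_lt hr')
        omega
      · have hsplit := Finset.sum_Ioc_consecutive g (show r ≤ N from hrN) (le_of_lt h)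
        have hz2 : ∑ s ∈ Finset.Ioc N r', g s = 0 :=
          Finset.sum_eq_zero fun x hx => hz x (Finset.mem_Ioc.mp hx).1
        have h1' := h2 N hrN le_rfl
        have := Pre_sub g hrN
        omega
    rw [sum_g] at hsum
    omega

end S13


theorem stmt13 (n : ℕ) (f : ℕ → ℕ) (hf : IsPtn n f) (hreg : RegF 2 f)
    (h0 : epsN 2 n f 0 = 1) (h1 : epsN 2 n f 1 = 1)
    (r : ℕ) (hr : NormalN 2 f (resRem 2 f r) r)
    (hbot : ∀ r' : ℕ, NormalN 2 f (resRem 2 f r') r' → r' ≤ r)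
    (i : ZMod 2) (hi : i = resRem 2 f r)
    (hphi : phiN 2 n f i = 3) :
    Odd n := by
  classical
  obtain ⟨hdec, hsum, hvan⟩ := hf
  -- basic structure of the strict partition
  have mono : ∀ a b, 1 ≤ a → a ≤ b → f b ≤ f a := by
    intro a b ha hab
    induction b, hab using Nat.le_induction with
    | base => exact le_rfl
    | succ b hb ih => exact le_trans (hdec b (by omega)) ih
  have hstrict : ∀ s, 1 ≤ s → f (s + 1) ≠ 0 → f (s + 1) < f s := by
    intro s hs hne
    have h := hreg s hs
    rw [show s + 2 - 1 = s + 1 by omega] at h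
    have h2 := hdec s hs
    have h3 := h hne
    omega
  set h : ℕ := Nat.findGreatest (fun s => f s ≠ 0) n with hhdef
  have H := (Nat.findGreatest_eq_iff).mp hhdef.symm
  have hhn : h ≤ n := H.1
  have hfh : h ≠ 0 → f h ≠ 0 := H.2.1
  have hzero_gt : ∀ s, h < s → f s = 0 := by
    intro s hs
    rcases le_or_gt s n with h1 | h1
    · by_contra hc
      exact H.2.2 hs h1 hc
    · exact hvan s h1
  have hne_le : ∀ s, 1 ≤ s → s ≤ h → f s ≠ 0 := by
    intro s h1 h2
    have hm := mono s h h1 h2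
    have := hfh (by omega)
    omega
  have hRem : ∀ s, 1 ≤ s → s ≤ h → Rem f s := by
    intro s h1 h2
    refine ⟨h1, ?_⟩
    rcases le_or_gt (s+1) h with h3 | h3
    · exact hstrict s h1 (hne_le (s+1) (by omega) h3)
    · have h4 := hzero_gt (s+1) h3
      have h5 := hne_le s h1 h2
      omega
  have hAdd : ∀ s, 1 ≤ s → s ≤ h + 1 → Addb f s := by
    intro s h1 h2
    refine ⟨h1, ?_⟩
    rcases eq_or_lt_of_le h1 with h3 | h3
    · left; omega
    · right
      have hs1 : 1 ≤ s - 1 := by omega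
      have hs2 : s - 1 ≤ h := by omega
      rcases le_or_gt s h with h4 | h4
      · have h5 := hstrict (s-1) hs1
          (by rw [show s - 1 + 1 = s by omega]; exact hne_le s h1 h4)
        rwa [show s - 1 + 1 = s by omega] at h5
      · have hfs : f s = 0 := hzero_gt s (by omega)
        have := hne_le (s-1) hs1 hs2
        omega
  have hNotRem : ∀ s, h < s → ¬ Rem f s := by
    rintro s hs ⟨_, hlt⟩
    have := hzero_gt s hs
    omega
  have hNotAdd : ∀ s, h + 1 < s → ¬ Addb f s := by
    rintro s hs ⟨hs1, hs2⟩
    have hfs : f s = 0 := hzero_gt s (by omega)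
    have hfs1 : f (s-1) = 0 := hzero_gt (s-1) (by omega)
    rcases hs2 with h2 | h2 <;> omega
  -- the ±1 sequence
  have hgz2 : ∀ s, h + 1 < s → S13.gfun f i s = 0 := by
    intro s hs
    unfold S13.gfun
    rw [if_neg (by rintro ⟨hA, _⟩; exact hNotAdd s hs hA),
      if_neg (by rintro ⟨hR, _⟩; exact hNotRem s (by omega) hR)]
    norm_num
  have hgzN : ∀ s, n + 1 < s → S13.gfun f i s = 0 := fun s hs => hgz2 s (by omega)
  -- master identity
  have hmaster := S13.master (S13.gfun f i) (S13.g_bound f i) (n+1)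
  have hconfil : ((Finset.Icc 1 (n+1)).filter fun r =>
        S13.gfun f i r = 1 ∧ ∀ j, r ≤ j → j ≤ n+1 →
          S13.Pre (S13.gfun f i) r ≤ S13.Pre (S13.gfun f i) j)
      = (Finset.Icc 1 (n+1)).filter fun r => ConormalN 2 f i r := by
    apply Finset.filter_congr
    intro r hrm
    have hm := Finset.mem_Icc.mp hrm
    exact (S13.conormal_iff f i (n+1) r hm.2 hgzN).symm
  have hnorfil : ((Finset.Icc 1 (n+1)).filter fun r =>
        S13.gfun f i r = -1 ∧ ∀ j, j < r →
          S13.Pre (S13.gfun f i) r < S13.Pre (S13.gfun f i) j)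
      = (Finset.Icc 1 n).filter fun r => NormalN 2 f i r := by
    have e1 : ((Finset.Icc 1 (n+1)).filter fun r =>
        S13.gfun f i r = -1 ∧ ∀ j, j < r →
          S13.Pre (S13.gfun f i) r < S13.Pre (S13.gfun f i) j)
        = (Finset.Icc 1 (n+1)).filter fun r => NormalN 2 f i r := by
      apply Finset.filter_congr
      intro r hrm
      exact (S13.normal_iff f i r).symm
    rw [e1]
    rw [show Finset.Icc 1 (n+1) = insert (n+1) (Finset.Icc 1 n) by
      ext x; simp [Finset.mem_Icc]; omega]
    rw [Finset.filter_insert, if_neg]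
    rintro ⟨⟨_, hlt⟩, _⟩
    have := hvan (n+1) (by omega)
    omega
  have hPhiEps : (phiN 2 n f i : ℤ) - (epsN 2 n f i : ℤ)
      = S13.Pre (S13.gfun f i) (n+1) := by
    rw [phiN, epsN, ← hconfil, ← hnorfil]
    exact hmaster
  -- ε_i = 1
  have hepsi : epsN 2 n f i = 1 := by
    rcases (show ∀ j : ZMod 2, j = 0 ∨ j = 1 by decide) i with hc | hc <;> rw [hc]
    · exact h0
    · exact h1
  have hPre2 : S13.Pre (S13.gfun f i) (n+1) = 2 := by
    rw [← hPhiEps, hphi, hepsi]; norm_num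
  -- compute Pre (n+1)
  have hPre1 : S13.Pre (S13.gfun f i) (n+1) = S13.Pre (S13.gfun f i) (h+1) := by
    have hsub := S13.Pre_sub (S13.gfun f i) (show h + 1 ≤ n + 1 by omega)
    have hz : ∑ s ∈ Finset.Ioc (h+1) (n+1), S13.gfun f i s = 0 :=
      Finset.sum_eq_zero fun x hx => hgz2 x (Finset.mem_Ioc.mp hx).1
    omega
  set l : ℕ := ((Finset.Icc 1 h).filter fun s => resRem 2 f s = i).card with hldef
  have hcardIcc : (Finset.Icc 1 h).card = h := by rw [Nat.card_Icc]; omega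
  have hlh : l ≤ h := by
    calc l ≤ (Finset.Icc 1 h).card := Finset.card_filter_le _ _
    _ = h := hcardIcc
  have hcardsplit := Finset.card_filter_add_card_filter_not
    (s := Finset.Icc 1 h) (p := fun s => resRem 2 f s = i)
  have hgval : ∀ s ∈ Finset.Icc 1 h,
      S13.gfun f i s = (if resRem 2 f s = i then (-1:ℤ) else 1) := by
    intro s hs
    have hm := Finset.mem_Icc.mp hs
    by_cases hres : resRem 2 f s = i
    · rw [if_pos hres]; exact (S13.g_eq_neg1 f i s).mpr ⟨hRem s hm.1 hm.2, hres⟩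
    · rw [if_neg hres]
      refine (S13.g_eq_1 f i s).mpr ⟨hAdd s hm.1 (by omega), ?_⟩
      rw [S13.resAdd_eq, S13.zmod2_of_ne hres]
      exact (show ∀ a : ZMod 2, a + 1 + 1 = a by decide) i
  have hPreh : S13.Pre (S13.gfun f i) h = (h:ℤ) - 2 * l := by
    rw [S13.Pre_def, Finset.sum_congr rfl hgval, Finset.sum_ite,
      Finset.sum_const, Finset.sum_const]
    have hneg : ((Finset.Icc 1 h).filter fun s => ¬ resRem 2 f s = i).card = h - l := by
      omega
    rw [hneg, ← hldef]
    simp only [nsmul_eq_mul, smul_eq_mul]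
    omega
  have hgtop : S13.gfun f i (h+1) = (if ((h:ZMod 2) = i) then (1:ℤ) else 0) := by
    have hres : resAdd 2 f (h+1) = (h : ZMod 2) := by
      unfold resAdd
      rw [hzero_gt (h+1) (by omega)]
      push_cast
      exact (show ∀ a : ZMod 2, ((0:ZMod 2) + 1) - (a + 1) = a by decide) _
    have hnr : ¬ (Rem f (h+1) ∧ resRem 2 f (h+1) = i) := by
      rintro ⟨hR, _⟩; exact hNotRem (h+1) (by omega) hR
    have hA : Addb f (h+1) := hAdd (h+1) (by omega) le_rfl
    unfold S13.gfun
    rw [if_neg hnr]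
    by_cases hcase : (h : ZMod 2) = i
    · rw [if_pos ⟨hA, by rw [hres]; exact hcase⟩, if_pos hcase]; ring
    · rw [if_neg (by rintro ⟨_, hc⟩; rw [hres] at hc; exact hcase hc), if_neg hcase]
      ring
  have E1 : (h:ℤ) - 2*(l:ℤ) + (if ((h:ZMod 2) = i) then (1:ℤ) else 0) = 2 := by
    have e2 := S13.Pre_succ (S13.gfun f i) h
    rw [hPre1, e2, hPreh, hgtop] at hPre2
    split_ifs at hPre2 ⊢ <;> omega
  -- parity computation
  have hsum_h : ∑ s ∈ Finset.Icc 1 h, f s = n := by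
    rw [← hsum]
    apply Finset.sum_subset (Finset.Icc_subset_Icc_right hhn)
    intro x hx hnx
    simp only [Finset.mem_Icc] at hx hnx
    exact hzero_gt x (by omega)
  set S : ℕ := ∑ s ∈ Finset.Icc 1 h, s with hSdef
  have hGauss : 2 * S = (h + 1) * h := by
    have e1 : Finset.range (h+1) = insert 0 (Finset.Icc 1 h) := by
      ext x; simp [Finset.mem_Icc, Finset.mem_range]; omega
    have e2 := Finset.sum_range_id_mul_two (h+1)
    rw [e1, Finset.sum_insert (by simp)] at e2
    simp only [Nat.add_sub_cancel] at e2
    omega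
  have hiv2 : ((i.val : ℕ) : ZMod 2) = i := ZMod.natCast_rightInverse i
  have hivlt : i.val < 2 := ZMod.val_lt i
  have E2 : (n : ZMod 2) = (l : ZMod 2) * i
      + ((h - l : ℕ) : ZMod 2) * (i + 1) + ((S : ℕ) : ZMod 2) := by
    have e1 : ((n:ℕ) : ZMod 2) = ((∑ s ∈ Finset.Icc 1 h, f s : ℕ) : ZMod 2) := by
      rw [hsum_h]
    rw [e1, Nat.cast_sum]
    have e2 : ∀ s ∈ Finset.Icc 1 h,
        ((f s : ℕ) : ZMod 2) = resRem 2 f s + ((s:ℕ) : ZMod 2) := by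
      intro s _
      unfold resRem
      ring
    rw [Finset.sum_congr rfl e2, Finset.sum_add_distrib]
    congr 1
    · rw [← Finset.sum_filter_add_sum_filter_not (Finset.Icc 1 h)
        (fun s => resRem 2 f s = i)]
      congr 1
      · rw [Finset.sum_congr rfl (fun s hs => (Finset.mem_filter.mp hs).2),
          Finset.sum_const, nsmul_eq_mul]
      · have hcong : ∀ s ∈ (Finset.Icc 1 h).filter (fun s => ¬ resRem 2 f s = i),
            resRem 2 f s = i + 1 :=
          fun s hs => S13.zmod2_of_ne (Finset.mem_filter.mp hs).2
        rw [Finset.sum_congr rfl hcong, Finset.sum_const, nsmul_eq_mul]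
        have hc : ((Finset.Icc 1 h).filter fun s => ¬ resRem 2 f s = i).card = h - l := by
          omega
        rw [hc]
    · rw [← Nat.cast_sum]
  have E2n : n % 2 = (l * i.val + (h - l) * (i.val + 1) + S) % 2 := by
    have e3 : ((n:ℕ) : ZMod 2)
        = ((l * i.val + (h - l) * (i.val + 1) + S : ℕ) : ZMod 2) := by
      rw [E2]
      push_cast
      rw [hiv2]
    exact (ZMod.natCast_eq_natCast_iff _ _ _).mp e3
  have hhi : ((h : ZMod 2) = i) ↔ h % 2 = i.val := by
    rw [← hiv2, ZMod.natCast_eq_natCast_iff]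
    have : (h ≡ i.val [MOD 2]) ↔ h % 2 = i.val := by
      unfold Nat.ModEq
      omega
    rw [this, hiv2]
  have E1' : (h:ℤ) - 2*(l:ℤ) + (if h % 2 = i.val then (1:ℤ) else 0) = 2 := by
    by_cases hp : h % 2 = i.val
    · rw [if_pos (hhi.mpr hp)] at E1
      rw [if_pos hp]
      exact E1
    · rw [if_neg (fun hx => hp (hhi.mp hx))] at E1
      rw [if_neg hp]
      exact E1
  rw [Nat.odd_iff]
  rcases Nat.even_or_odd h with ⟨m, hm⟩ | ⟨m, hm⟩
  · -- h = m + m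
    set q : ℕ := m * m with hq
    have e : (h + 1) * h = 4 * q + 2 * m := by rw [hm, hq]; ring
    rw [e] at hGauss
    by_cases hp : h % 2 = i.val
    · rw [if_pos hp] at E1'
      omega
    · rw [if_neg hp] at E1'
      rcases (show i.val = 0 ∨ i.val = 1 by omega) with hv | hv <;> rw [hv] at E2n hp <;> omega
  · -- h = 2*m + 1
    set q : ℕ := m * m with hq
    have e : (h + 1) * h = 4 * q + 6 * m + 2 := by rw [hm, hq]; ring
    rw [e] at hGauss
    by_cases hp : h % 2 = i.val
    · rw [if_pos hp] at E1'
      rcases (show i.val = 0 ∨ i.val = 1 by omega) with hv | hv <;> rw [hv] at E2n hp <;> omega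
    · rw [if_neg hp] at E1'
      omega
end
end
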